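/- arXiv:2301.11019 — 10 statements merged into one kernel-verified Lean document; each statement's English description precedes it below -/
import Mathlib

section
/- There exists n₀ such that for every n ≥ n₀, every injective map x : Fin n → ℝ, and every integer k with 2 ≤ k ≤ 0.9·log n, the number of ordered k-tuples of pairwise distinct indices of Fin n that are not cycle-reconstructible is at most n^{−0.01} · n·(n−1)⋯(n−k+1), i.e., at most an n^{−0.01} fraction of all ordered k-tuples of pairwise distinct indices. (log denotes the natural logarithm.) -/
open Filter


/-- A tuple `(t 0, …, t (k-1))` of indices is cycle-reconstructible if any assignment of
positions realising the cyclically consecutive distances realises all pairwise distances. -/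
def CycleReconstructible {n k : ℕ} (x : Fin n → ℝ) (t : Fin k → Fin n) : Prop :=
  ∀ w : Fin k → ℝ,
    (∀ (j : ℕ) (h : j + 1 < k),
      |w ⟨j + 1, h⟩ - w ⟨j, Nat.lt_of_succ_lt h⟩| =
        |x (t ⟨j + 1, h⟩) - x (t ⟨j, Nat.lt_of_succ_lt h⟩)|) →
    (∀ h : 0 < k,
      |w ⟨0, h⟩ - w ⟨k - 1, Nat.sub_lt h Nat.one_pos⟩| =
        |x (t ⟨0, h⟩) - x (t ⟨k - 1, Nat.sub_lt h Nat.one_pos⟩)|) →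
    ∀ a b : Fin k, |w a - w b| = |x (t a) - x (t b)|

private def Xt {n k : ℕ} (x : Fin n → ℝ) (t : Fin k → Fin n) (i : ℕ) : ℝ :=
  if h : i < k then x (t ⟨i, h⟩) else 0

private lemma extract {n k : ℕ} (hk : 2 ≤ k) (x : Fin n → ℝ) (hx : Function.Injective x)
    (t : Fin k → Fin n) (ht : Function.Injective t) (hcr : ¬ CycleReconstructible x t) :
    ∃ m : Fin (k - 1) → ℤ, (∀ j, m j = -1 ∨ m j = 0 ∨ m j = 1) ∧ m ≠ 0 ∧
      ∑ j : Fin (k - 1), (m j : ℝ) * (Xt x t ((j : ℕ) + 1) - Xt x t (j : ℕ)) = 0 := by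
  classical
  rw [CycleReconstructible] at hcr
  push_neg at hcr
  obtain ⟨w, h1, h2, a, b, hab⟩ := hcr
  set K := k - 1 with hKdef
  have hKk : K + 1 = k := by omega
  set W : ℕ → ℝ := fun i => if h : i < k then w ⟨i, h⟩ else 0 with hW
  set X : ℕ → ℝ := fun i => Xt x t i with hX
  have hWa : ∀ a : Fin k, W (a : ℕ) = w a := by
    intro a; simp only [hW]; rw [dif_pos a.isLt]
  have hXa : ∀ a : Fin k, X (a : ℕ) = x (t a) := by
    intro a; simp only [hX, Xt]; rw [dif_pos a.isLt]
  have hstep : ∀ j < K, W (j+1) - W j = X (j+1) - X j ∨ W (j+1) - W j = -(X (j+1) - X j) := by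
    intro j hj
    have h : j + 1 < k := by omega
    have h' : j < k := by omega
    have := h1 j h
    have e1 : W (j+1) = w ⟨j+1, h⟩ := by simp only [hW]; rw [dif_pos h]
    have e2 : W j = w ⟨j, Nat.lt_of_succ_lt h⟩ := by simp only [hW]; rw [dif_pos h']
    have e3 : X (j+1) = x (t ⟨j+1, h⟩) := by simp only [hX, Xt]; rw [dif_pos h]
    have e4 : X j = x (t ⟨j, Nat.lt_of_succ_lt h⟩) := by simp only [hX, Xt]; rw [dif_pos h']
    rw [e1, e2, e3, e4]
    exact abs_eq_abs.mp this
  have h0k : 0 < k := by omega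
  have hKlt : K < k := by omega
  have hclose : W 0 - W K = X 0 - X K ∨ W 0 - W K = -(X 0 - X K) := by
    have := h2 h0k
    have e1 : W 0 = w ⟨0, h0k⟩ := by simp only [hW]; rw [dif_pos h0k]
    have e2 : W K = w ⟨k - 1, Nat.sub_lt h0k Nat.one_pos⟩ := by
      simp only [hW]; rw [dif_pos hKlt]
    have e3 : X 0 = x (t ⟨0, h0k⟩) := by simp only [hX, Xt]; rw [dif_pos h0k]
    have e4 : X K = x (t ⟨k - 1, Nat.sub_lt h0k Nat.one_pos⟩) := by
      simp only [hX, Xt]; rw [dif_pos hKlt]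
    rw [e1, e2, e3, e4]
    exact abs_eq_abs.mp this
  obtain ⟨δ, hδ1, hδ⟩ : ∃ δ : ℝ, (δ = 1 ∨ δ = -1) ∧ W K - W 0 = δ * (X K - X 0) := by
    rcases hclose with h | h
    · exact ⟨1, Or.inl rfl, by linarith⟩
    · exact ⟨-1, Or.inr rfl, by linarith⟩
  set m : Fin K → ℤ := fun j =>
    if W ((j:ℕ)+1) - W (j:ℕ) = δ * (X ((j:ℕ)+1) - X (j:ℕ)) then 0
    else (if δ = 1 then -1 else 1) with hm
  have hmv : ∀ j, m j = -1 ∨ m j = 0 ∨ m j = 1 := by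
    intro j; simp only [hm]
    split
    · exact Or.inr (Or.inl rfl)
    · split
      · exact Or.inl rfl
      · exact Or.inr (Or.inr rfl)
  have claim1 : ∀ j : Fin K, (m j : ℝ) * (X ((j:ℕ)+1) - X (j:ℕ))
      = ((W ((j:ℕ)+1) - W (j:ℕ)) - δ * (X ((j:ℕ)+1) - X (j:ℕ))) / 2 := by
    intro j
    by_cases hc : W ((j:ℕ)+1) - W (j:ℕ) = δ * (X ((j:ℕ)+1) - X (j:ℕ))
    · simp only [hm, if_pos hc, Int.cast_zero, zero_mul, hc]; ring
    · rcases hstep (j:ℕ) j.isLt with hu | hu <;> rcases hδ1 with h | h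
      · exact absurd (by rw [hu, h, one_mul]) hc
      · subst h
        simp only [hm, if_neg hc]
        rw [if_neg (show ¬(-1:ℝ) = 1 by norm_num), hu]
        push_cast; ring
      · subst h
        simp only [hm, if_neg hc]
        rw [if_pos trivial, hu]
        push_cast; ring
      · exact absurd (by rw [hu, h]; ring) hc
  have key : ∑ j : Fin K, (m j : ℝ) * (X ((j:ℕ)+1) - X (j:ℕ)) = 0 := by
    rw [Finset.sum_congr rfl (fun j _ => claim1 j)]
    rw [Fin.sum_univ_eq_sum_range
      (fun j => ((W (j+1) - W j) - δ * (X (j+1) - X j)) / 2) K]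
    rw [← Finset.sum_div, Finset.sum_sub_distrib, ← Finset.mul_sum,
      Finset.sum_range_sub W K, Finset.sum_range_sub X K, hδ]
    ring
  have hmne : m ≠ 0 := by
    intro h0
    have hall : ∀ j, j < K → W (j+1) - W j = δ * (X (j+1) - X j) := by
      intro j hj
      by_contra hc
      have hval : m ⟨j, hj⟩ = 0 := by rw [h0]; rfl
      simp only [hm, if_neg hc] at hval
      rcases hδ1 with h | h <;> rw [h] at hval <;> norm_num at hval
    have htel : ∀ i, i ≤ K → W i - W 0 = δ * (X i - X 0) := by
      intro i hi
      have hsum : ∑ j ∈ Finset.range i, (W (j+1) - W j)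
          = ∑ j ∈ Finset.range i, δ * (X (j+1) - X j) :=
        Finset.sum_congr rfl (fun j hj => hall j (by
          have := Finset.mem_range.mp hj; omega))
      rw [Finset.sum_range_sub W i, ← Finset.mul_sum, Finset.sum_range_sub X i] at hsum
      exact hsum
    apply hab
    have ha : (a:ℕ) ≤ K := by have := a.isLt; omega
    have hb : (b:ℕ) ≤ K := by have := b.isLt; omega
    have hWab : W (a:ℕ) - W (b:ℕ) = δ * (X (a:ℕ) - X (b:ℕ)) := by
      linear_combination htel (a:ℕ) ha - htel (b:ℕ) hb
    rw [← hWa a, ← hWa b, ← hXa a, ← hXa b, hWab]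
    rcases hδ1 with h | h <;> rw [h]
    · rw [one_mul]
    · rw [neg_one_mul, abs_neg]
  exact ⟨m, hmv, hmne, key⟩

private lemma count_rel {n k : ℕ} (hk : 2 ≤ k) (x : Fin n → ℝ) (hx : Function.Injective x)
    (m : Fin (k - 1) → ℤ) (hm : m ≠ 0) :
    {t : Fin k → Fin n | Function.Injective t ∧
        ∑ j : Fin (k - 1), (m j : ℝ) * (Xt x t ((j : ℕ) + 1) - Xt x t (j : ℕ)) = 0}.ncard
      ≤ n.descFactorial (k - 1) := by
  classical
  have hne : (Finset.univ.filter (fun j => m j ≠ 0)).Nonempty := by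
    rcases Function.ne_iff.mp hm with ⟨j, hj⟩
    refine ⟨j, ?_⟩
    simp only [Finset.mem_filter, Finset.mem_univ, true_and]
    simpa using hj
  set j₀ := (Finset.univ.filter (fun j => m j ≠ 0)).max' hne with hj₀def
  have hj₀ne : m j₀ ≠ 0 := by
    have := Finset.max'_mem _ hne
    simpa using this
  have hj₀max : ∀ j, j₀ < j → m j = 0 := by
    intro j hj
    by_contra hc
    exact absurd (Finset.le_max' _ j (by simpa using hc)) (not_le.mpr hj)
  have hj₀K : (j₀ : ℕ) < k - 1 := j₀.isLt
  have hi₀ : (j₀ : ℕ) + 1 < k := by omega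
  set i₀ : Fin k := ⟨(j₀ : ℕ) + 1, hi₀⟩ with hi₀def
  set g : Fin (k-1) → Fin k := fun j =>
    if (j : ℕ) < (j₀ : ℕ) + 1 then ⟨(j : ℕ), by have := j.isLt; omega⟩
    else ⟨(j : ℕ) + 1, by have := j.isLt; omega⟩ with hg
  have hgval : ∀ j : Fin (k-1),
      (g j : ℕ) = if (j : ℕ) < (j₀ : ℕ) + 1 then (j : ℕ) else (j : ℕ) + 1 := by
    intro j; simp only [hg]; split <;> rfl
  have hg_inj : Function.Injective g := by
    intro a b hab
    have h := congrArg Fin.val hab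
    rw [hgval a, hgval b] at h
    apply Fin.ext
    split at h <;> split at h <;> omega
  have hg_ne : ∀ j, g j ≠ i₀ := by
    intro j h
    have := congrArg Fin.val h
    rw [hgval j] at this
    simp only [hi₀def] at this
    split at this <;> omega
  have hg_surj : ∀ i : Fin k, i ≠ i₀ → ∃ j, g j = i := by
    intro i hi
    have hii : (i : ℕ) ≠ (j₀ : ℕ) + 1 := fun h => hi (Fin.ext h)
    by_cases hlt : (i : ℕ) < (j₀ : ℕ) + 1
    · refine ⟨⟨(i : ℕ), by omega⟩, Fin.ext ?_⟩
      rw [hgval]; simp only []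
      rw [if_pos (by simpa using hlt)]
    · refine ⟨⟨(i : ℕ) - 1, by have := i.isLt; omega⟩, Fin.ext ?_⟩
      rw [hgval]
      rw [if_neg (by simp; omega)]
      simp; omega
  -- count target
  have hcount : {f : Fin (k-1) → Fin n | Function.Injective f}.ncard = n.descFactorial (k-1) := by
    have e : {f : Fin (k-1) → Fin n | Function.Injective f} ≃ (Fin (k-1) ↪ Fin n) :=
      (Equiv.subtypeEquivRight (fun f => Iff.rfl)).trans
        (Equiv.subtypeInjectiveEquivEmbedding _ _)
    rw [Set.ncard_eq_toFinset_card', Set.toFinset_card, Fintype.card_congr e,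
      Fintype.card_embedding_eq, Fintype.card_fin, Fintype.card_fin]
  rw [← hcount]
  apply Set.ncard_le_ncard_of_injOn (fun t => t ∘ g)
  · intro t htmem
    exact htmem.1.comp hg_inj
  · intro t hts t' hts' hgt
    simp only [Set.mem_setOf_eq] at hts hts'
    obtain ⟨htInj, htRel⟩ := hts
    obtain ⟨ht'Inj, ht'Rel⟩ := hts'
    have hoff : ∀ i : Fin k, i ≠ i₀ → t i = t' i := by
      intro i hi
      obtain ⟨j, rfl⟩ := hg_surj i hi
      exact congrFun hgt j
    set G : ℕ → ℝ := fun i => Xt x t i - Xt x t' i with hG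
    have hG0 : ∀ i : ℕ, i ≠ (j₀ : ℕ) + 1 → G i = 0 := by
      intro i hi
      by_cases h : i < k
      · have hne' : (⟨i, h⟩ : Fin k) ≠ i₀ := by
          intro hc
          exact hi (by simpa [hi₀def] using congrArg Fin.val hc)
        simp only [hG, Xt, dif_pos h, hoff _ hne', sub_self]
      · simp only [hG, Xt, dif_neg h, sub_self]
    have hsum : ∑ j : Fin (k-1), (m j : ℝ) * (G ((j:ℕ)+1) - G (j:ℕ)) = 0 := by
      have he : ∀ j : Fin (k-1), (m j : ℝ) * (G ((j:ℕ)+1) - G (j:ℕ))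
          = (m j : ℝ) * (Xt x t ((j:ℕ)+1) - Xt x t (j:ℕ))
            - (m j : ℝ) * (Xt x t' ((j:ℕ)+1) - Xt x t' (j:ℕ)) := by
        intro j; simp only [hG]; ring
      rw [Finset.sum_congr rfl (fun j _ => he j), Finset.sum_sub_distrib, htRel, ht'Rel,
        sub_zero]
    have hsingle : ∑ j : Fin (k-1), (m j : ℝ) * (G ((j:ℕ)+1) - G (j:ℕ))
        = (m j₀ : ℝ) * (G ((j₀:ℕ)+1) - G (j₀:ℕ)) := by
      apply Finset.sum_eq_single_of_mem j₀ (Finset.mem_univ _)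
      intro j _ hj
      rcases lt_or_gt_of_ne hj with h | h
      · have hlt : (j : ℕ) < (j₀ : ℕ) := h
        rw [hG0 (j:ℕ) (by omega), hG0 ((j:ℕ)+1) (by omega)]
        ring
      · rw [hj₀max j h, Int.cast_zero, zero_mul]
    have hGz : G ((j₀:ℕ)+1) = 0 := by
      have h0 : (m j₀ : ℝ) * (G ((j₀:ℕ)+1) - G (j₀:ℕ)) = 0 := by rw [← hsingle, hsum]
      rw [hG0 (j₀:ℕ) (by omega), sub_zero] at h0
      exact (mul_eq_zero.mp h0).resolve_left (Int.cast_ne_zero.mpr hj₀ne)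
    have ht_i₀ : t i₀ = t' i₀ := by
      have h := hGz
      simp only [hG, Xt, dif_pos hi₀] at h
      exact hx (sub_eq_zero.mp h)
    funext i
    by_cases hi : i = i₀
    · rw [hi]; exact ht_i₀
    · exact hoff i hi

private lemma bad_count {n k : ℕ} (hk : 2 ≤ k) (x : Fin n → ℝ) (hx : Function.Injective x) :
    {t : Fin k → Fin n | Function.Injective t ∧ ¬ CycleReconstructible x t}.ncard
      ≤ 3 ^ (k - 1) * n.descFactorial (k - 1) := by
  classical
  set M : Finset (Fin (k-1) → ℤ) := Fintype.piFinset (fun _ => ({-1, 0, 1} : Finset ℤ)) with hM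
  set S : (Fin (k-1) → ℤ) → Set (Fin k → Fin n) := fun m =>
    {t | Function.Injective t ∧
      ∑ j : Fin (k-1), (m j : ℝ) * (Xt x t ((j:ℕ)+1) - Xt x t (j:ℕ)) = 0} with hS
  have hsub : {t : Fin k → Fin n | Function.Injective t ∧ ¬ CycleReconstructible x t}.toFinset
      ⊆ (M.erase 0).biUnion (fun m => (S m).toFinset) := by
    intro t htmem
    simp only [Set.mem_toFinset, Set.mem_setOf_eq] at htmem
    obtain ⟨htInj, hcr⟩ := htmem
    obtain ⟨m, hmv, hm0, hrel⟩ := extract hk x hx t htInj hcr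
    refine Finset.mem_biUnion.mpr ⟨m, Finset.mem_erase.mpr ⟨hm0, ?_⟩, ?_⟩
    · rw [hM]
      exact Fintype.mem_piFinset.mpr (fun j => by rcases hmv j with h | h | h <;> simp [h])
    · simp only [hS, Set.mem_toFinset, Set.mem_setOf_eq]
      exact ⟨htInj, hrel⟩
  calc {t : Fin k → Fin n | Function.Injective t ∧ ¬ CycleReconstructible x t}.ncard
      = {t : Fin k → Fin n | Function.Injective t ∧
          ¬ CycleReconstructible x t}.toFinset.card := Set.ncard_eq_toFinset_card' _
    _ ≤ ((M.erase 0).biUnion (fun m => (S m).toFinset)).card := Finset.card_le_card hsub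
    _ ≤ ∑ m ∈ M.erase 0, ((S m).toFinset).card := Finset.card_biUnion_le
    _ ≤ ∑ _m ∈ M.erase 0, n.descFactorial (k-1) := by
        apply Finset.sum_le_sum
        intro m hmm
        have h0 : m ≠ 0 := (Finset.mem_erase.mp hmm).1
        rw [← Set.ncard_eq_toFinset_card']
        exact count_rel hk x hx m h0
    _ = (M.erase 0).card * n.descFactorial (k-1) := by
        rw [Finset.sum_const, smul_eq_mul]
    _ ≤ 3 ^ (k-1) * n.descFactorial (k-1) := by
        apply Nat.mul_le_mul_right
        calc (M.erase 0).card ≤ M.card := Finset.card_erase_le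
          _ = 3 ^ (k-1) := by
              rw [hM, Fintype.card_piFinset]
              simp only [Finset.prod_const, Finset.card_univ, Fintype.card_fin]
              norm_num

private lemma log3_lt : Real.log 3 < 1.1 := by
  rw [Real.log_lt_iff_lt_exp (by norm_num)]
  have h1 : Real.exp 1 ≥ 2.7182818283 := le_of_lt Real.exp_one_gt_d9
  have h2 : (1.105 : ℝ) ≤ Real.exp 0.1 := by
    have := Real.sum_le_exp_of_nonneg (by norm_num : (0:ℝ) ≤ 0.1) 3
    have hsum : ∑ i ∈ Finset.range 3, (0.1:ℝ) ^ i / i.factorial = 1.105 := by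
      simp [Finset.sum_range_succ]
      norm_num
    linarith [hsum ▸ this]
  calc (3:ℝ) < 2.7182818283 * 1.105 := by norm_num
    _ ≤ Real.exp 1 * Real.exp 0.1 := by
        apply mul_le_mul h1 h2 (by norm_num) (le_of_lt (Real.exp_pos 1))
    _ = Real.exp 1.1 := by rw [← Real.exp_add]; norm_num


/-- For `2 ≤ k ≤ 0.9 log n`, at most an `n ^ (-0.01)` fraction of all ordered `k`-tuples of
pairwise distinct indices are not cycle-reconstructible. -/
theorem statement7 :
    ∃ n₀ : ℕ, ∀ n : ℕ, n₀ ≤ n → ∀ x : Fin n → ℝ, Function.Injective x →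
      ∀ k : ℕ, 2 ≤ k → (k : ℝ) ≤ 0.9 * Real.log n →
      ({t : Fin k → Fin n | Function.Injective t ∧ ¬ CycleReconstructible x t}.ncard : ℝ)
        ≤ (n : ℝ) ^ (-(0.01 : ℝ)) * (n.descFactorial k : ℝ) := by
  classical
  set δ : ℝ := 0.99 - 0.9 * Real.log 3 with hδdef
  have hδ : 0 < δ := by
    have := log3_lt
    rw [hδdef]; nlinarith
  have hev1 : ∀ᶠ (r : ℝ) in atTop, 2 ≤ r ^ δ :=
    (tendsto_rpow_atTop hδ).eventually_ge_atTop 2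
  have hev2 : ∀ᶠ (r : ℝ) in atTop, ‖Real.log r‖ ≤ (1/4) * ‖r‖ :=
    Real.isLittleO_log_id_atTop.def (by norm_num)
  have hev : ∀ᶠ (N : ℕ) in atTop,
      (2 ≤ (N:ℝ) ^ δ ∧ ‖Real.log (N:ℝ)‖ ≤ (1/4) * ‖(N:ℝ)‖) :=
    tendsto_natCast_atTop_atTop.eventually (hev1.and hev2)
  obtain ⟨n₀, hn₀⟩ := eventually_atTop.mp (hev.and (eventually_ge_atTop 4))
  refine ⟨n₀, ?_⟩
  intro n hn x hx k hk2 hk9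
  obtain ⟨K, rfl⟩ : ∃ K, k = K + 1 := ⟨k - 1, by omega⟩
  obtain ⟨⟨h2δ, hlogb⟩, h4⟩ := hn₀ n hn
  have hn0R : (0:ℝ) < n := by exact_mod_cast (by omega : 0 < n)
  have hnn : (0:ℝ) ≤ (n:ℝ) := le_of_lt hn0R
  have hlogn : Real.log n ≤ (n:ℝ)/4 := by
    have h2 : ‖(n:ℝ)‖ = (n:ℝ) := by rw [Real.norm_eq_abs, abs_of_nonneg hnn]
    rw [h2] at hlogb
    calc Real.log n ≤ ‖Real.log n‖ := le_abs_self _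
      _ ≤ 1/4 * n := hlogb
      _ = n/4 := by ring
  have h4' : (4:ℝ) ≤ n := by exact_mod_cast h4
  have hk9' : (K:ℝ) + 1 ≤ 0.9 * Real.log n := by
    have : ((K+1 : ℕ):ℝ) ≤ 0.9 * Real.log n := hk9
    push_cast at this; linarith
  have hk_half : (K:ℝ) + 1 ≤ (n:ℝ)/2 - 1 := by nlinarith [hlogn, hk9']
  have hKn : K + 1 < n := by
    have : ((K:ℝ)+1) < n := by linarith
    exact_mod_cast this
  have hKle : (K:ℝ) ≤ 0.9 * Real.log n := by linarith
  have main := bad_count hk2 x hx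
  simp only [Nat.add_sub_cancel] at main
  have h3K : (3:ℝ)^K ≤ (n:ℝ) ^ (0.9 * Real.log 3 : ℝ) := by
    have he : (3:ℝ)^K = Real.exp ((K:ℝ) * Real.log 3) := by
      rw [Real.exp_nat_mul, Real.exp_log (by norm_num : (0:ℝ) < 3)]
    rw [he, Real.rpow_def_of_pos hn0R]
    apply Real.exp_le_exp.mpr
    have hl3 : (0:ℝ) ≤ Real.log 3 := Real.log_nonneg (by norm_num)
    calc (K:ℝ) * Real.log 3 ≤ (0.9 * Real.log n) * Real.log 3 :=
          mul_le_mul_of_nonneg_right hKle hl3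
      _ = Real.log n * (0.9 * Real.log 3) := by ring
  have hhalf : (n:ℝ)/2 ≤ (n:ℝ) - (K:ℝ) := by linarith
  have hrpow_nonneg : (0:ℝ) ≤ (n:ℝ) ^ (-(0.01:ℝ)) := Real.rpow_nonneg hnn _
  have hsplit : (n:ℝ) ^ (0.99:ℝ) = (n:ℝ) ^ (0.9 * Real.log 3:ℝ) * (n:ℝ) ^ δ := by
    rw [← Real.rpow_add hn0R]; congr 1; rw [hδdef]; ring
  have hfin : (n:ℝ) ^ (0.9 * Real.log 3:ℝ) ≤ (n:ℝ) ^ (-(0.01:ℝ)) * ((n:ℝ) - K) := by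
    have e1 : (n:ℝ) ^ (-(0.01:ℝ)) * ((n:ℝ)/2) = (n:ℝ)^(0.99:ℝ)/2 := by
      rw [show (0.99:ℝ) = -(0.01) + 1 by norm_num, Real.rpow_add hn0R, Real.rpow_one]
      ring
    have e2 : 2 * (n:ℝ)^(0.9*Real.log 3:ℝ) ≤ (n:ℝ)^(0.99:ℝ) := by
      rw [hsplit]
      have hp : (0:ℝ) ≤ (n:ℝ)^(0.9*Real.log 3:ℝ) := Real.rpow_nonneg hnn _
      nlinarith [h2δ, hp]
    have e3 : (n:ℝ) ^ (-(0.01:ℝ)) * ((n:ℝ)/2) ≤ (n:ℝ) ^ (-(0.01:ℝ)) * ((n:ℝ) - K) :=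
      mul_le_mul_of_nonneg_left hhalf hrpow_nonneg
    linarith
  calc ({t : Fin (K+1) → Fin n | Function.Injective t ∧
          ¬ CycleReconstructible x t}.ncard : ℝ)
      ≤ ((3 ^ K * n.descFactorial K : ℕ) : ℝ) := by exact_mod_cast main
    _ = (3:ℝ)^K * (n.descFactorial K : ℝ) := by push_cast; ring
    _ ≤ ((n:ℝ) ^ (-(0.01:ℝ)) * ((n:ℝ) - K)) * (n.descFactorial K : ℝ) :=
        mul_le_mul_of_nonneg_right (le_trans h3K hfin) (Nat.cast_nonneg _)
    _ = (n:ℝ) ^ (-(0.01:ℝ)) * (n.descFactorial (K+1) : ℝ) := by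
        rw [Nat.descFactorial_succ]
        push_cast [Nat.cast_sub (show K ≤ n by omega)]
        ring
end

section
/- There exists n₀ such that for every n ≥ n₀, every injective map x : Fin n → ℝ, and every integer k with 2 ≤ k ≤ 0.9·log n, the number of unordered pairs {u,v} of distinct indices of Fin n that are k-bad is at most n^{−0.005} · n(n−1)/2, i.e., at most an n^{−0.005} fraction of all pairs. (log denotes the natural logarithm.) -/
/-- An ordered `k`-tuple contains both `u` and `v` among its entries. -/
def ContainsBoth {n k : ℕ} (u v : Fin n) (t : Fin k → Fin n) : Prop :=
  (∃ a, t a = u) ∧ ∃ b, t b = v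

/-- A pair `{u, v}` is `k`-bad if more than an `n ^ (-0.005)` fraction of the ordered `k`-tuples
of pairwise distinct indices containing both `u` and `v` are not cycle-reconstructible. -/
def KBad {n : ℕ} (x : Fin n → ℝ) (k : ℕ) (u v : Fin n) : Prop :=
  (n : ℝ) ^ (-(0.005 : ℝ)) *
      ({t : Fin k → Fin n | Function.Injective t ∧ ContainsBoth u v t}.ncard : ℝ)
    < ({t : Fin k → Fin n | Function.Injective t ∧ ContainsBoth u v t ∧
        ¬ CycleReconstructible x t}.ncard : ℝ)

/-!
If a tuple `t` is not cycle-reconstructible, compare the steps of a bad realisation `w` with the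
steps of `x` along `t`: they agree up to sign, and since the closing distances also agree up to
sign, either all signs are equal (and then `w` realises every distance) or the steps of `x` over
some nonempty set `S` of positions sum to zero. In the latter case the value at the first position
of `S` is determined by the others, so for injective `x` at most `2^(k-1) n^(k-1)` tuples are not
cycle-reconstructible. A tuple covers at most `k^2` pairs, while a `k`-bad pair lies in at least
`n^(-0.005) (n-2)_(k-2) ≥ n^(k-2.005) / 2` such tuples; double counting then bounds the number of
`k`-bad pairs by about `k^2 2^k n^1.01`, which is small because `2^k ≤ n^0.63` and
`k^2 ≤ log^2 n` for `k ≤ 0.9 log n`.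
-/

open Finset Filter Real Function

theorem exists_sign_or_subsum_eq_zero {ι : Type*} (s : Finset ι) (d e : ι → ℝ)
    (he : ∀ j ∈ s, |e j| = |d j|) (hsum : |∑ j ∈ s, e j| = |∑ j ∈ s, d j|) :
    (∃ σ : ℝ, |σ| = 1 ∧ ∀ j ∈ s, e j = σ * d j) ∨
      ∃ S ⊆ s, S.Nonempty ∧ ∑ j ∈ S, d j = 0 := by
  classical
  set P := s.filter fun j => e j = d j
  set Q := s.filter fun j => e j ≠ d j
  have hQ : ∀ j ∈ Q, e j = -d j := fun j hj ↦ by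
    rw [mem_filter] at hj
    exact (abs_eq_abs.mp (he j hj.1)).resolve_left hj.2
  have hd : ∑ j ∈ s, d j = ∑ j ∈ P, d j + ∑ j ∈ Q, d j :=
    (sum_filter_add_sum_filter_not s _ d).symm
  have he' : ∑ j ∈ s, e j = ∑ j ∈ P, d j - ∑ j ∈ Q, d j := by
    rw [← sum_filter_add_sum_filter_not s (fun j => e j = d j) e, sub_eq_add_neg,
      ← sum_neg_distrib]
    exact congrArg₂ (· + ·) (sum_congr rfl fun j hj ↦ (mem_filter.mp hj).2)
      (sum_congr rfl hQ)
  rcases abs_eq_abs.mp hsum with h | h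
  · rcases Q.eq_empty_or_nonempty with hQe | hQne
    · refine .inl ⟨1, abs_one, fun j hj ↦ ?_⟩
      by_contra hne
      have : j ∈ Q := mem_filter.mpr ⟨hj, by simpa using hne⟩
      simp [hQe] at this
    · exact .inr ⟨Q, filter_subset _ _, hQne, by linarith⟩
  · rcases P.eq_empty_or_nonempty with hPe | hPne
    · refine .inl ⟨-1, by simp, fun j hj ↦ ?_⟩
      have hjP : j ∉ P := by simp [hPe]
      simpa using hQ j (mem_filter.mpr ⟨hj, fun h ↦ hjP (mem_filter.mpr ⟨hj, h⟩)⟩)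
    · exact .inr ⟨P, filter_subset _ _, hPne, by linarith⟩

theorem abs_sub_eq_of_forall_sub_succ_eq_mul {f g : ℕ → ℝ} {m : ℕ} {σ : ℝ} (hσ : |σ| = 1)
    (h : ∀ j < m, f (j + 1) - f j = σ * (g (j + 1) - g j)) {a b : ℕ} (ha : a ≤ m)
    (hb : b ≤ m) : |f a - f b| = |g a - g b| := by
  have key : ∀ a ≤ m, f a - f 0 = σ * (g a - g 0) := fun a ha ↦ by
    rw [← sum_range_sub, ← sum_range_sub, mul_sum]
    exact sum_congr rfl fun j hj ↦ h j (by simp at hj; omega)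
  rw [show f a - f b = σ * (g a - g b) by linear_combination key a ha - key b hb, abs_mul, hσ,
    one_mul]

def Fin.extendByZero {α : Type*} [Zero α] {k : ℕ} (f : Fin k → α) (j : ℕ) : α :=
  if h : j < k then f ⟨j, h⟩ else 0

theorem Fin.extendByZero_of_lt {α : Type*} [Zero α] {k j : ℕ} (f : Fin k → α) (h : j < k) :
    Fin.extendByZero f j = f ⟨j, h⟩ :=
  dif_pos h

theorem Fin.extendByZero_eq_of_ne {α : Type*} [Zero α] {k : ℕ} {f g : Fin k → α} {i₀ : Fin k}
    (h : ∀ i ≠ i₀, f i = g i) {j : ℕ} (hj : j ≠ i₀) :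
    Fin.extendByZero f j = Fin.extendByZero g j := by
  by_cases hjk : j < k
  · rw [Fin.extendByZero_of_lt f hjk, Fin.extendByZero_of_lt g hjk]
    exact h _ (Fin.ne_of_val_ne hj)
  · simp [Fin.extendByZero, hjk]

theorem exists_subsum_eq_zero_of_not_cycleReconstructible {n k : ℕ} {x : Fin n → ℝ}
    {t : Fin k → Fin n} (h : ¬ CycleReconstructible x t) :
    ∃ S ⊆ range (k - 1), S.Nonempty ∧
      ∑ j ∈ S, (Fin.extendByZero (x ∘ t) (j + 1) - Fin.extendByZero (x ∘ t) j) = 0 := by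
  simp only [CycleReconstructible, not_forall] at h
  obtain ⟨w, hstep, hclose, a, b, hab⟩ := h
  have hk : 0 < k := a.pos
  set W := Fin.extendByZero w
  set X := Fin.extendByZero (x ∘ t)
  have hW : ∀ j (h : j < k), W j = w ⟨j, h⟩ := fun j h ↦ Fin.extendByZero_of_lt w h
  have hX : ∀ j (h : j < k), X j = x (t ⟨j, h⟩) := fun j h ↦ Fin.extendByZero_of_lt _ h
  have hlast : k - 1 < k := by omega
  refine (exists_sign_or_subsum_eq_zero (range (k - 1)) (fun j ↦ X (j + 1) - X j)
    (fun j ↦ W (j + 1) - W j) (fun j hj ↦ ?_) ?_).resolve_left ?_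
  · have hj : j + 1 < k := by simp at hj; omega
    rw [hW _ hj, hW _ (by omega), hX _ hj, hX _ (by omega)]
    exact hstep j hj
  · rw [sum_range_sub, sum_range_sub, abs_sub_comm, abs_sub_comm (X _), hW 0 hk, hW _ hlast,
      hX 0 hk, hX _ hlast]
    exact hclose hk
  · rintro ⟨σ, hσ, hsign⟩
    apply hab
    have := abs_sub_eq_of_forall_sub_succ_eq_mul hσ (fun j hj ↦ hsign j (mem_range.mpr hj))
      (Nat.le_sub_one_of_lt a.isLt) (Nat.le_sub_one_of_lt b.isLt)
    rwa [hW _ a.isLt, hW _ b.isLt, hX _ a.isLt, hX _ b.isLt] at this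

theorem card_le_pow_of_determined_at {ι β : Type*} [Fintype ι] [DecidableEq ι] [Fintype β]
    (A : Finset (ι → β)) (i₀ : ι)
    (h : ∀ t ∈ A, ∀ t' ∈ A, (∀ i ≠ i₀, t i = t' i) → t i₀ = t' i₀) :
    #A ≤ Fintype.card β ^ (Fintype.card ι - 1) := by
  have hinj : Set.InjOn (fun (t : ι → β) (i : {i // i ≠ i₀}) ↦ t i) A := by
    intro t ht t' ht' htt'
    have hoff : ∀ i ≠ i₀, t i = t' i := fun i hi ↦ congrFun htt' ⟨i, hi⟩
    funext i
    by_cases hi : i = i₀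
    · exact hi ▸ h t ht t' ht' hoff
    · exact hoff i hi
  calc #A ≤ #(univ : Finset ({i // i ≠ i₀} → β)) :=
        card_le_card_of_injOn _ (fun _ _ ↦ mem_coe.mpr (mem_univ _)) hinj
    _ = Fintype.card β ^ (Fintype.card ι - 1) := by
        rw [card_univ, Fintype.card_fun, Fintype.card_subtype_compl, Fintype.card_subtype_eq]

theorem eq_of_subsum_sub_succ_eq_zero {X Y : ℕ → ℝ} {S : Finset ℕ} {i : ℕ} (hi : i ∈ S)
    (hmin : ∀ j ∈ S, i ≤ j) (hXY : ∀ j ≠ i, X j = Y j)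
    (hX : ∑ j ∈ S, (X (j + 1) - X j) = 0) (hY : ∑ j ∈ S, (Y (j + 1) - Y j) = 0) :
    X i = Y i := by
  have hsucc : ∑ j ∈ S, (X (j + 1) - Y (j + 1)) = 0 :=
    sum_eq_zero fun j hj ↦ by rw [hXY _ (by have := hmin j hj; omega), sub_self]
  have hself : ∑ j ∈ S, (X j - Y j) = X i - Y i :=
    sum_eq_single_of_mem i hi fun j _ hj ↦ by rw [hXY j hj, sub_self]
  have : ∑ j ∈ S, (X (j + 1) - X j) - ∑ j ∈ S, (Y (j + 1) - Y j) =
      ∑ j ∈ S, (X (j + 1) - Y (j + 1)) - ∑ j ∈ S, (X j - Y j) := by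
    rw [← sum_sub_distrib, ← sum_sub_distrib]
    exact sum_congr rfl fun _ _ ↦ by ring
  linarith

theorem card_subsum_eq_zero_le {n k : ℕ} {x : Fin n → ℝ} (hx : Injective x) {S : Finset ℕ}
    (hS : S ⊆ range (k - 1)) (hne : S.Nonempty) :
    #{t : Fin k → Fin n |
        ∑ j ∈ S, (Fin.extendByZero (x ∘ t) (j + 1) - Fin.extendByZero (x ∘ t) j) = 0}
      ≤ n ^ (k - 1) := by
  have hmin : S.min' hne < k := by have := mem_range.mp (hS (S.min'_mem hne)); omega
  -- the entry at the first index of `S` is pinned down by all the others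
  refine (card_le_pow_of_determined_at _ (⟨S.min' hne, hmin⟩ : Fin k)
    fun t ht t' ht' hoff ↦ ?_).trans (by simp)
  apply hx
  have := eq_of_subsum_sub_succ_eq_zero (S.min'_mem hne) (fun j hj ↦ S.min'_le j hj)
    (fun j hj ↦ Fin.extendByZero_eq_of_ne (fun i hi ↦ congrArg x (hoff i hi)) hj)
    (mem_filter.mp ht).2 (mem_filter.mp ht').2
  rwa [Fin.extendByZero_of_lt _ hmin, Fin.extendByZero_of_lt _ hmin] at this

open scoped Classical in
theorem card_not_cycleReconstructible_le {n k : ℕ} {x : Fin n → ℝ} (hx : Injective x) :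
    #{t : Fin k → Fin n | ¬ CycleReconstructible x t} ≤ 2 ^ (k - 1) * n ^ (k - 1) := by
  calc #{t : Fin k → Fin n | ¬ CycleReconstructible x t}
      ≤ #(((range (k - 1)).powerset.filter Finset.Nonempty).biUnion fun S ↦
          ({t : Fin k → Fin n |
            ∑ j ∈ S, (Fin.extendByZero (x ∘ t) (j + 1) - Fin.extendByZero (x ∘ t) j) = 0} :
              Finset _)) := by
        refine card_le_card fun t ht ↦ ?_
        obtain ⟨S, hS, hne, hsum⟩ :=
          exists_subsum_eq_zero_of_not_cycleReconstructible (mem_filter.mp ht).2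
        exact mem_biUnion.mpr ⟨S, mem_filter.mpr ⟨mem_powerset.mpr hS, hne⟩,
          mem_filter.mpr ⟨mem_univ _, hsum⟩⟩
    _ ≤ #((range (k - 1)).powerset.filter Finset.Nonempty) * n ^ (k - 1) :=
        card_biUnion_le_card_mul _ _ _ fun S hS ↦
          card_subsum_eq_zero_le hx (mem_powerset.mp (mem_filter.mp hS).1) (mem_filter.mp hS).2
    _ ≤ 2 ^ (k - 1) * n ^ (k - 1) := by
        gcongr
        exact (card_filter_le _ _).trans (by simp)

open scoped Classical in
theorem descFactorial_le_card_injective_containsBoth {n m : ℕ} {u v : Fin n} (huv : u ≠ v) :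
    (n - 2).descFactorial m ≤
      #{t : Fin (m + 2) → Fin n | Injective t ∧ ContainsBoth u v t} := by
  set s : Finset (Fin n) := {u, v}ᶜ
  let Φ : (Fin m ↪ s) → Fin (m + 2) → Fin n := fun e ↦ Fin.cons u (Fin.cons v fun i ↦ e i)
  have hΦ : Injective Φ := fun e e' h ↦ by
    have := Fin.cons_right_injective _ (Fin.cons_right_injective _ h)
    exact DFunLike.ext _ _ fun i ↦ Subtype.ext (congrFun this i)
  have hmem : ∀ e, Φ e ∈ ({t : Fin (m + 2) → Fin n | Injective t ∧ ContainsBoth u v t} :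
      Finset _) := fun e ↦ by
    have hval : ∀ i, (e i : Fin n) ≠ u ∧ (e i : Fin n) ≠ v := fun i ↦ by
      simpa [s, not_or] using (e i).2
    refine mem_filter.mpr ⟨mem_univ _, Fin.cons_injective_iff.mpr ⟨?_, Fin.cons_injective_iff.mpr
      ⟨?_, Subtype.val_injective.comp e.injective⟩⟩, ⟨0, rfl⟩, ⟨1, rfl⟩⟩
    · simpa [Fin.range_cons, huv] using fun i ↦ (hval i).1
    · simpa using fun i ↦ (hval i).2
  calc (n - 2).descFactorial m = #(univ : Finset (Fin m ↪ s)) := by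
        rw [card_univ, Fintype.card_embedding_eq, Fintype.card_coe, card_compl, card_pair huv,
          Fintype.card_fin, Fintype.card_fin]
    _ ≤ _ := card_le_card_of_injOn Φ (fun e _ ↦ hmem e) hΦ.injOn

open scoped Classical in
theorem card_kBad_mul_le {n : ℕ} {x : Fin n → ℝ} (hx : Injective x) (k : ℕ) {c : ℝ}
    (hc : ∀ u v : Fin n, u ≠ v →
      c ≤ #{t : Fin k → Fin n | Injective t ∧ ContainsBoth u v t}) :
    ({e : Sym2 (Fin n) | ∃ u v : Fin n, e = s(u, v) ∧ u ≠ v ∧ KBad x k u v}.ncard : ℝ) *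
        ((n : ℝ) ^ (-(0.005 : ℝ)) * c) ≤
      2 ^ (k - 1) * (n : ℝ) ^ (k - 1) * (k : ℝ) ^ 2 := by
  set B : Finset (Sym2 (Fin n)) := {e | ∃ u v : Fin n, e = s(u, v) ∧ u ≠ v ∧ KBad x k u v}
  set T : Finset (Fin k → Fin n) := {t | ¬ CycleReconstructible x t}
  let r : Sym2 (Fin n) → (Fin k → Fin n) → Prop := fun e t ↦ ∀ z ∈ e, z ∈ Set.range t
  have hm : ∀ e ∈ B, (n : ℝ) ^ (-(0.005 : ℝ)) * c ≤ #(T.bipartiteAbove r e) := by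
    intro e he
    obtain ⟨u, v, rfl, huv, hbad⟩ := (mem_filter.mp he).2
    rw [KBad, Set.ncard_eq_toFinset_card', Set.ncard_eq_toFinset_card', Set.toFinset_ofPred,
      Set.toFinset_ofPred] at hbad
    calc (n : ℝ) ^ (-(0.005 : ℝ)) * c
        ≤ (n : ℝ) ^ (-(0.005 : ℝ)) * #{t : Fin k → Fin n | Injective t ∧ ContainsBoth u v t} := by
          gcongr; exact hc u v huv
      _ ≤ #{t : Fin k → Fin n | Injective t ∧ ContainsBoth u v t ∧ ¬ CycleReconstructible x t} :=
          hbad.le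
      _ ≤ #(T.bipartiteAbove r s(u, v)) := by
          refine Nat.cast_le.mpr (card_le_card fun t ht ↦ ?_)
          obtain ⟨-, -, ⟨⟨a, ha⟩, ⟨b, hb⟩⟩, hrec⟩ := mem_filter.mp ht
          refine (mem_bipartiteAbove r).mpr ⟨mem_filter.mpr ⟨mem_univ _, hrec⟩, ?_⟩
          rintro z hz
          rcases Sym2.mem_iff.mp hz with rfl | rfl
          exacts [⟨a, ha⟩, ⟨b, hb⟩]
  have hn : ∀ t ∈ T, (#(B.bipartiteBelow r t) : ℝ) ≤ (k : ℝ) ^ 2 := by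
    intro t _
    have : #(B.bipartiteBelow r t) ≤ #(univ.image fun p : Fin k × Fin k ↦ s(t p.1, t p.2)) :=
      card_le_card fun e he ↦ by
        induction e using Sym2.ind with
        | h a b =>
          obtain ⟨i, hi⟩ := ((mem_bipartiteBelow r).mp he).2 a (Sym2.mem_mk_left a b)
          obtain ⟨j, hj⟩ := ((mem_bipartiteBelow r).mp he).2 b (Sym2.mem_mk_right a b)
          exact mem_image.mpr ⟨(i, j), mem_univ _, by rw [hi, hj]⟩
    exact_mod_cast this.trans (card_image_le.trans (by simp [sq]))
  have hT : (#T : ℝ) ≤ 2 ^ (k - 1) * (n : ℝ) ^ (k - 1) := by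
    exact_mod_cast card_not_cycleReconstructible_le hx
  rw [Set.ncard_eq_toFinset_card', Set.toFinset_ofPred]
  calc (#B : ℝ) * ((n : ℝ) ^ (-(0.005 : ℝ)) * c) ≤ #T * (k : ℝ) ^ 2 := by
        simpa only [nsmul_eq_mul] using card_nsmul_le_card_nsmul r hm hn
    _ ≤ 2 ^ (k - 1) * (n : ℝ) ^ (k - 1) * (k : ℝ) ^ 2 := by gcongr

theorem pow_div_two_le_descFactorial {n m : ℕ} (h : 2 * ((m : ℝ) + 2) ^ 2 ≤ n) :
    (n : ℝ) ^ m / 2 ≤ (n - 2).descFactorial m := by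
  set N : ℝ := (n : ℝ)
  have hm2 : (m : ℝ) + 2 ≤ N := by nlinarith
  have hN : 0 < N := by linarith
  have hmn : m + 2 ≤ n := Nat.cast_le.mp (by push_cast; exact hm2)
  have ha : -2 ≤ -(((m : ℝ) + 2) / N) := by
    rw [neg_le_neg_iff, div_le_iff₀ hN]; nlinarith
  have hsmall : 1 / 2 ≤ 1 + m * -(((m : ℝ) + 2) / N) := by
    have : (m : ℝ) * (((m : ℝ) + 2) / N) ≤ 1 / 2 := by
      rw [← mul_div_assoc, div_le_iff₀ hN]; nlinarith
    linarith [mul_neg (m : ℝ) (((m : ℝ) + 2) / N)]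
  have hbase : N - (m + 2) = N * (1 + -(((m : ℝ) + 2) / N)) := by field_simp; ring
  calc N ^ m / 2 ≤ N ^ m * (1 + m * -(((m : ℝ) + 2) / N)) := by nlinarith [pow_pos hN m]
    _ ≤ N ^ m * (1 + -(((m : ℝ) + 2) / N)) ^ m := by gcongr; exact one_add_mul_le_pow ha m
    _ = ((n - (m + 2) : ℕ) : ℝ) ^ m := by rw [← mul_pow, ← hbase, Nat.cast_sub hmn]; push_cast; rfl
    _ ≤ (n - 2).descFactorial m := by
        exact_mod_cast (Nat.pow_le_pow_left (by omega) m).trans (Nat.pow_sub_le_descFactorial _ m)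

theorem two_pow_le_rpow_of_le_log {N : ℝ} {k : ℕ} (hN : 1 ≤ N) (hk : (k : ℝ) ≤ 0.9 * log N) :
    (2 : ℝ) ^ k ≤ N ^ (0.63 : ℝ) := by
  rw [← Real.rpow_natCast, rpow_def_of_pos two_pos, rpow_def_of_pos (by linarith)]
  refine exp_le_exp.mpr ?_
  have := mul_le_mul_of_nonneg_left hk (log_nonneg one_le_two)
  nlinarith [log_two_lt_d9, log_nonneg hN]

theorem eventually_four_mul_log_sq_le_rpow : ∀ᶠ N : ℝ in atTop, 4 * log N ^ 2 ≤ N ^ (0.36 : ℝ) := by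
  filter_upwards [(isLittleO_log_rpow_rpow_atTop 2 (by norm_num : (0 : ℝ) < 0.36)).bound
    (by norm_num : (0 : ℝ) < 1 / 4), eventually_ge_atTop 0] with N hN hN0
  rw [rpow_two, norm_of_nonneg (sq_nonneg _), norm_of_nonneg (rpow_nonneg hN0 _)] at hN
  linarith

theorem sq_le_log_sq_of_le_log {N k : ℝ} (hk0 : 0 ≤ k) (hk : k ≤ 0.9 * log N) :
    k ^ 2 ≤ log N ^ 2 :=
  pow_le_pow_left₀ hk0 (by linarith) 2

theorem two_pow_mul_pow_mul_sq_le {N : ℝ} {m : ℕ} (hN : 2 ≤ N)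
    (hlog : 4 * log N ^ 2 ≤ N ^ (0.36 : ℝ)) (hm : ((m + 2 : ℕ) : ℝ) ≤ 0.9 * log N) :
    2 ^ (m + 1) * N ^ (m + 1) * ((m + 2 : ℕ) : ℝ) ^ 2 ≤
      N ^ (-(0.005 : ℝ)) * (N * (N - 1) / 2) * (N ^ (-(0.005 : ℝ)) * (N ^ m / 2)) := by
  have hN0 : 0 < N := by linarith
  have hsq := sq_le_log_sq_of_le_log (Nat.cast_nonneg _) hm
  have hpow := two_pow_le_rpow_of_le_log (by linarith) hm
  have hsplit : N ^ (-(0.005 : ℝ)) * N ^ (-(0.005 : ℝ)) * N = N ^ (0.36 : ℝ) * N ^ (0.63 : ℝ) := by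
    rw [← rpow_add hN0, ← rpow_add_one hN0.ne', ← rpow_add hN0]; norm_num
  calc 2 ^ (m + 1) * N ^ (m + 1) * ((m + 2 : ℕ) : ℝ) ^ 2
      = 2 ^ (m + 2) * ((m + 2 : ℕ) : ℝ) ^ 2 * N * N ^ m / 2 := by ring
    _ ≤ N ^ (0.63 : ℝ) * (N ^ (0.36 : ℝ) / 4) * N * N ^ m / 2 := by gcongr; linarith
    _ = N ^ (-(0.005 : ℝ)) * N ^ (-(0.005 : ℝ)) * N * (N / 2) * N ^ m / 4 := by
        rw [hsplit]; ring
    _ ≤ N ^ (-(0.005 : ℝ)) * N ^ (-(0.005 : ℝ)) * N * (N - 1) * N ^ m / 4 := by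
        gcongr; linarith
    _ = _ := by ring

/-- For `2 ≤ k ≤ 0.9 log n`, at most an `n ^ (-0.005)` fraction of all unordered pairs of
distinct indices are `k`-bad. -/
theorem statement8 :
    ∃ n₀ : ℕ, ∀ n : ℕ, n₀ ≤ n → ∀ x : Fin n → ℝ, Function.Injective x →
      ∀ k : ℕ, 2 ≤ k → (k : ℝ) ≤ 0.9 * Real.log n →
      (({e : Sym2 (Fin n) | ∃ u v : Fin n, e = s(u, v) ∧ u ≠ v ∧ KBad x k u v}.ncard : ℝ))
        ≤ (n : ℝ) ^ (-(0.005 : ℝ)) * ((n : ℝ) * ((n : ℝ) - 1) / 2) := by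
  obtain ⟨n₀, hn₀⟩ := eventually_atTop.mp ((eventually_ge_atTop 2).and
    (tendsto_natCast_atTop_atTop.eventually eventually_four_mul_log_sq_le_rpow))
  refine ⟨n₀, fun n hn x hx k hk hkn ↦ ?_⟩
  obtain ⟨hn2, hlog⟩ := hn₀ n hn
  obtain ⟨m, rfl⟩ := Nat.exists_eq_add_of_le' hk
  have hN : (2 : ℝ) ≤ n := by exact_mod_cast hn2
  have hmn : 2 * ((m : ℝ) + 2) ^ 2 ≤ n := by
    have hsq := sq_le_log_sq_of_le_log (Nat.cast_nonneg _) hkn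
    have := rpow_le_self_of_one_le (by linarith : (1 : ℝ) ≤ n) (by norm_num : (0.36 : ℝ) ≤ 1)
    push_cast at hsq
    linarith
  have hbad := card_kBad_mul_le hx (m + 2) fun u v huv ↦ (pow_div_two_le_descFactorial hmn).trans
    (by exact_mod_cast descFactorial_le_card_injective_containsBoth huv)
  have hpos : 0 < (n : ℝ) ^ (-(0.005 : ℝ)) * ((n : ℝ) ^ m / 2) := by positivity
  exact le_of_mul_le_mul_right (hbad.trans (two_pow_mul_pow_mul_sq_le hN hlog hkn)) hpos
end

section
/- There exists n₀ such that for every n ≥ n₀ and every injective map x : Fin n → ℝ, the number of useless unordered pairs of distinct indices of Fin n is at most n^{2−0.004}. -/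
/-- A pair `{u, v}` is useless if it is `k`-bad for some `2 ≤ k ≤ 0.9 log n`. -/
def Useless {n : ℕ} (x : Fin n → ℝ) (u v : Fin n) : Prop :=
  ∃ k : ℕ, 2 ≤ k ∧ (k : ℝ) ≤ 0.9 * Real.log n ∧ KBad x k u v

open Finset

namespace Stmt9

/-- Telescoped coefficient vector of `a`. -/
noncomputable def B {m : ℕ} (a : Fin m → ℝ) (i : Fin (m+1)) : ℝ :=
  (if h : 0 < i.val then a ⟨i.val - 1, by have := i.isLt; omega⟩ else 0) -
  (if h : i.val < m then a ⟨i.val, h⟩ else 0)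

lemma sum_B {m : ℕ} (a : Fin m → ℝ) (f : Fin (m+1) → ℝ) :
    ∑ i : Fin (m+1), B a i * f i = ∑ j : Fin m, a j * (f j.succ - f j.castSucc) := by
  have e1 : ∑ i : Fin (m+1),
      (if h : 0 < i.val then a ⟨i.val - 1, by have := i.isLt; omega⟩ else 0) * f i
      = ∑ j : Fin m, a j * f j.succ := by
    rw [Fin.sum_univ_succ]
    rw [dif_neg (by simp)]
    rw [zero_mul, zero_add]
    refine Finset.sum_congr rfl fun j _ => ?_
    rw [dif_pos (by simp : 0 < (j.succ : Fin (m+1)).val)]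
    congr 1
  have e2 : ∑ i : Fin (m+1),
      (if h : i.val < m then a ⟨i.val, h⟩ else 0) * f i
      = ∑ j : Fin m, a j * f j.castSucc := by
    rw [Fin.sum_univ_castSucc]
    rw [dif_neg (by simp)]
    rw [zero_mul, add_zero]
    refine Finset.sum_congr rfl fun j _ => ?_
    have hc : (j.castSucc : Fin (m+1)).val < m := by exact j.isLt
    rw [dif_pos hc]
    congr 1
  calc ∑ i : Fin (m+1), B a i * f i
      = ∑ i : Fin (m+1),
        ((if h : 0 < i.val then a ⟨i.val - 1, by have := i.isLt; omega⟩ else 0) * f i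
          - (if h : i.val < m then a ⟨i.val, h⟩ else 0) * f i) := by
        refine Finset.sum_congr rfl fun i _ => ?_
        rw [B, sub_mul]
    _ = (∑ j : Fin m, a j * f j.succ) - ∑ j : Fin m, a j * f j.castSucc := by
        rw [Finset.sum_sub_distrib, e1, e2]
    _ = ∑ j : Fin m, a j * (f j.succ - f j.castSucc) := by
        rw [← Finset.sum_sub_distrib]
        exact Finset.sum_congr rfl fun j _ => by ring

lemma sum_B_zero {m : ℕ} (a : Fin m → ℝ) : ∑ i : Fin (m+1), B a i = 0 := by
  have := sum_B a (fun _ => 1)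
  simpa using this

lemma a_eq_zero_of_B {m : ℕ} (a : Fin m → ℝ) (h : ∀ i, B a i = 0) : a = 0 := by
  have key : ∀ p : ℕ, ∀ hp : p < m, a ⟨p, hp⟩ = 0 := by
    intro p
    induction p with
    | zero =>
      intro hp
      have h0 := h ⟨0, by omega⟩
      simp only [B] at h0
      rw [dif_neg (by simp), dif_pos (by simpa using hp)] at h0
      linarith
    | succ p ih =>
      intro hp
      have hB := h ⟨p+1, by omega⟩
      simp only [B] at hB
      rw [dif_pos (by simp), dif_pos (by simpa using hp)] at hB
      simp only [Nat.add_sub_cancel] at hB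
      have hprev : a ⟨p, by omega⟩ = 0 := ih (by omega)
      rw [hprev] at hB
      linarith
  funext j
  simpa using key j.val j.isLt

lemma sum_telescope {m : ℕ} (g : Fin (m+1) → ℝ) :
    ∑ j : Fin m, (g j.succ - g j.castSucc) = g (Fin.last m) - g 0 := by
  induction m with
  | zero => simp [Fin.last]
  | succ m ih =>
    rw [Fin.sum_univ_castSucc]
    have h := ih (fun i => g i.castSucc)
    have e : ∀ j : Fin m, g j.castSucc.succ - g j.castSucc.castSucc
        = g (j.succ.castSucc) - g (j.castSucc.castSucc) := by
      intro j; rw [Fin.succ_castSucc]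
    calc (∑ j : Fin m, (g j.castSucc.succ - g j.castSucc.castSucc))
          + (g (Fin.last m).succ - g (Fin.last m).castSucc)
        = (∑ j : Fin m, (g (j.succ.castSucc) - g (j.castSucc.castSucc)))
          + (g (Fin.last m).succ - g (Fin.last m).castSucc) := by
          rw [Finset.sum_congr rfl fun j _ => e j]
      _ = (g ((Fin.last m).castSucc) - g 0) + (g (Fin.last (m+1)) - g ((Fin.last m).castSucc)) := by
          rw [h, Fin.succ_last]
          simp [Fin.castSucc_zero]
      _ = g (Fin.last (m+1)) - g 0 := by ring

lemma const_of_step {m : ℕ} (g : Fin (m+1) → ℝ)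
    (h : ∀ j : Fin m, g j.succ = g j.castSucc) : ∀ i, g i = g 0 := by
  intro i
  induction i using Fin.induction with
  | zero => rfl
  | succ j ih => rw [h j]; exact ih

lemma exists_relation {n m : ℕ} (x : Fin n → ℝ) (t : Fin (m+1) → Fin n)
    (hx : Function.Injective x) (ht : Function.Injective t)
    (hcr : ¬ CycleReconstructible x t) :
    ∃ a : Fin m → ℝ, (∀ j, a j = -1 ∨ a j = 0 ∨ a j = 1) ∧ a ≠ 0 ∧
      (∑ i : Fin (m+1), B a i * x (t i)) = 0 := by
  unfold CycleReconstructible at hcr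
  push_neg at hcr
  obtain ⟨w, h1, h2, aw, bw, hab⟩ := hcr
  have step : ∀ j : Fin m,
      |w j.succ - w j.castSucc| = |x (t j.succ) - x (t j.castSucc)| := by
    intro j
    exact h1 j.val (by omega)
  have hcyc : |w 0 - w (Fin.last m)| = |x (t 0) - x (t (Fin.last m))| :=
    h2 (Nat.succ_pos m)
  have hne : ∀ j : Fin m, x (t j.succ) - x (t j.castSucc) ≠ 0 := by
    intro j he
    have : t j.succ = t j.castSucc := hx (by linarith [sub_eq_zero.mp he])
    have := ht this
    have := congrArg Fin.val this
    simp [Fin.val_succ] at this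
  set σ : Fin m → ℝ := fun j =>
    if w j.succ - w j.castSucc = x (t j.succ) - x (t j.castSucc) then 1 else -1 with hσdef
  have hσ : ∀ j, σ j = 1 ∨ σ j = -1 := by
    intro j; rw [hσdef]; dsimp only; split <;> simp
  have hstep' : ∀ j : Fin m,
      w j.succ - w j.castSucc = σ j * (x (t j.succ) - x (t j.castSucc)) := by
    intro j
    rcases abs_eq_abs.mp (step j) with h | h
    · rw [hσdef]; dsimp only; rw [if_pos h, one_mul]; exact h
    · rw [hσdef]; dsimp only
      rw [if_neg, neg_one_mul]; exact h
      intro hc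
      rw [hc] at h
      have : x (t j.succ) - x (t j.castSucc) = 0 := by linarith
      exact hne j this
  have T1 : w (Fin.last m) - w 0 = ∑ j : Fin m, σ j * (x (t j.succ) - x (t j.castSucc)) := by
    rw [← sum_telescope w]
    exact Finset.sum_congr rfl fun j _ => hstep' j
  have T2 : x (t (Fin.last m)) - x (t 0) = ∑ j : Fin m, (x (t j.succ) - x (t j.castSucc)) :=
    (sum_telescope (fun i => x (t i))).symm
  have done1 : ¬ (∀ j, σ j = 1) := by
    intro hall
    apply hab
    have hconst := const_of_step (fun i => w i - x (t i)) (by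
      intro j
      have := hstep' j
      rw [hall j, one_mul] at this
      linarith)
    have hw : ∀ i, w i - x (t i) = w 0 - x (t 0) := hconst
    have : w aw - w bw = x (t aw) - x (t bw) := by
      have h1 := hw aw; have h2 := hw bw; linarith
    rw [this]
  have done2 : ¬ (∀ j, σ j = -1) := by
    intro hall
    apply hab
    have hconst := const_of_step (fun i => w i + x (t i)) (by
      intro j
      have := hstep' j
      rw [hall j, neg_one_mul] at this
      linarith)
    have hw : ∀ i, w i + x (t i) = w 0 + x (t 0) := hconst
    have : w aw - w bw = -(x (t aw) - x (t bw)) := by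
      have h1 := hw aw; have h2 := hw bw; linarith
    rw [this, abs_neg]
  rcases abs_eq_abs.mp hcyc with hc | hc
  · refine ⟨fun j => (σ j - 1)/2, ?_, ?_, ?_⟩
    · intro j; rcases hσ j with h | h <;> norm_num [h]
    · intro h0
      apply done1
      intro j
      have := congrFun h0 j
      simp only [Pi.zero_apply] at this
      rcases hσ j with h | h
      · exact h
      · rw [h] at this; norm_num at this
    · rw [sum_B]
      have : ∑ j : Fin m, ((σ j - 1)/2) * (x (t j.succ) - x (t j.castSucc))
          = ((∑ j : Fin m, σ j * (x (t j.succ) - x (t j.castSucc)))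
            - ∑ j : Fin m, (x (t j.succ) - x (t j.castSucc))) / 2 := by
        rw [← Finset.sum_sub_distrib, Finset.sum_div]
        exact Finset.sum_congr rfl fun j _ => by ring
      rw [this, ← T1, ← T2]
      have : w (Fin.last m) - w 0 = x (t (Fin.last m)) - x (t 0) := by linarith
      rw [this]; ring
  · refine ⟨fun j => (σ j + 1)/2, ?_, ?_, ?_⟩
    · intro j; rcases hσ j with h | h <;> norm_num [h]
    · intro h0
      apply done2
      intro j
      have := congrFun h0 j
      simp only [Pi.zero_apply] at this
      rcases hσ j with h | h
      · rw [h] at this; norm_num at this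
      · exact h
    · rw [sum_B]
      have : ∑ j : Fin m, ((σ j + 1)/2) * (x (t j.succ) - x (t j.castSucc))
          = ((∑ j : Fin m, σ j * (x (t j.succ) - x (t j.castSucc)))
            + ∑ j : Fin m, (x (t j.succ) - x (t j.castSucc))) / 2 := by
        rw [← Finset.sum_add_distrib, Finset.sum_div]
        exact Finset.sum_congr rfl fun j _ => by ring
      rw [this, ← T1, ← T2]
      have : w (Fin.last m) - w 0 = -(x (t (Fin.last m)) - x (t 0)) := by linarith
      rw [this]; ring

lemma cr_of_le_three {n k : ℕ} (x : Fin n → ℝ) (t : Fin k → Fin n) (hk : k ≤ 3) :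
    CycleReconstructible x t := by
  intro w h1 h2 a b
  interval_cases k
  · exact a.elim0
  · have : a = b := Subsingleton.elim a b
    rw [this]; simp
  · have e01 := h1 0 (by norm_num)
    fin_cases a <;> fin_cases b
    · simp
    · rw [abs_sub_comm (w _), abs_sub_comm (x _)]; exact e01
    · exact e01
    · simp
  · have e01 := h1 0 (by norm_num)
    have e12 := h1 1 (by norm_num)
    have e02 := h2 (by norm_num)
    fin_cases a <;> fin_cases b
    · simp
    · rw [abs_sub_comm (w _), abs_sub_comm (x _)]; exact e01
    · exact e02
    · exact e01
    · simp
    · rw [abs_sub_comm (w _), abs_sub_comm (x _)]; exact e12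
    · rw [abs_sub_comm (w _), abs_sub_comm (x _)]; exact e02
    · exact e12
    · simp

lemma ncard_iUnion_le_mul {α I : Type*} [Fintype α] [Fintype I]
    (A : I → Set α) (c : ℕ) (h : ∀ i, (A i).ncard ≤ c) :
    (⋃ i, A i).ncard ≤ Fintype.card I * c := by
  classical
  have he : (⋃ i, A i) = ↑(Finset.univ.biUnion fun i => (A i).toFinset) := by
    ext z; simp
  rw [he, Set.ncard_coe_finset]
  calc (Finset.univ.biUnion fun i => (A i).toFinset).card
      ≤ ∑ i, ((A i).toFinset).card := Finset.card_biUnion_le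
    _ ≤ ∑ _i : I, c := Finset.sum_le_sum fun i _ => by
        rw [← Set.ncard_eq_toFinset_card']; exact h i
    _ = Fintype.card I * c := by rw [Finset.sum_const, smul_eq_mul, Finset.card_univ]

set_option maxHeartbeats 1000000 in
lemma bad_card_le {n m : ℕ} (x : Fin n → ℝ) (hx : Function.Injective x)
    (u v : Fin n) (huv : u ≠ v) :
    {t : Fin (m+1) → Fin n | Function.Injective t ∧ ContainsBoth u v t ∧
        ¬ CycleReconstructible x t}.ncard ≤ 3^m * (m+1)^3 * n^(m-2) := by
  classical
  set γ : Fin 3 → ℝ := fun c => (c.val : ℝ) - 1 with hγ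
  set A : ((Fin m → Fin 3) × Fin (m+1) × Fin (m+1) × Fin (m+1)) → Set (Fin (m+1) → Fin n) :=
    fun z => {t | t z.2.1 = u ∧ t z.2.2.1 = v ∧ z.2.1 ≠ z.2.2.1 ∧ z.2.2.2 ≠ z.2.1 ∧
      z.2.2.2 ≠ z.2.2.1 ∧ B (γ ∘ z.1) z.2.2.2 ≠ 0 ∧
      ∑ i : Fin (m+1), B (γ ∘ z.1) i * x (t i) = 0} with hA
  have hsub : {t : Fin (m+1) → Fin n | Function.Injective t ∧ ContainsBoth u v t ∧
      ¬ CycleReconstructible x t} ⊆ ⋃ z, A z := by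
    rintro t ⟨ht, ⟨⟨p, hp⟩, ⟨q, hq⟩⟩, hcr⟩
    obtain ⟨a, hval, hane, hrel⟩ := exists_relation x t hx ht hcr
    have hexc : ∀ j, ∃ c : Fin 3, γ c = a j := by
      intro j
      rcases hval j with h | h | h
      · exact ⟨0, by rw [hγ, h]; norm_num⟩
      · exact ⟨1, by rw [hγ, h]; norm_num⟩
      · exact ⟨2, by rw [hγ, h]; norm_num⟩
    choose c hc using hexc
    have hca : γ ∘ c = a := funext hc
    have hpq : p ≠ q := by rintro rfl; rw [hp] at hq; exact huv hq
    have hxuv : x u ≠ x v := fun h => huv (hx h)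
    have hj0 : ∃ j0 : Fin (m+1), j0 ≠ p ∧ j0 ≠ q ∧ B a j0 ≠ 0 := by
      by_contra hcon
      push_neg at hcon
      have hsum0 : B a p + B a q = 0 := by
        have hs1 : ∑ i : Fin (m+1), B a i = 0 := sum_B_zero a
        have hs2 : ∑ i ∈ ({p, q} : Finset (Fin (m+1))), B a i = ∑ i : Fin (m+1), B a i := by
          apply Finset.sum_subset (Finset.subset_univ _)
          intro i _ hi
          simp only [Finset.mem_insert, Finset.mem_singleton, not_or] at hi
          exact hcon i hi.1 hi.2
        rw [Finset.sum_pair hpq] at hs2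
        rw [hs2, hs1]
      have hrel2 : B a p * x u + B a q * x v = 0 := by
        have hs2 : ∑ i ∈ ({p, q} : Finset (Fin (m+1))), B a i * x (t i)
            = ∑ i : Fin (m+1), B a i * x (t i) := by
          apply Finset.sum_subset (Finset.subset_univ _)
          intro i _ hi
          simp only [Finset.mem_insert, Finset.mem_singleton, not_or] at hi
          rw [hcon i hi.1 hi.2, zero_mul]
        rw [Finset.sum_pair hpq, hp, hq] at hs2
        rw [hs2, hrel]
      have hBp : B a p = 0 := by
        have hz : B a p * (x u - x v) = 0 := by linear_combination hrel2 - x v * hsum0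
        rcases mul_eq_zero.mp hz with h | h
        · exact h
        · exact absurd (by linarith : x u = x v) hxuv
      have hBq : B a q = 0 := by linarith
      have hall : ∀ i, B a i = 0 := by
        intro i
        by_cases hip : i = p
        · rw [hip]; exact hBp
        by_cases hiq : i = q
        · rw [hiq]; exact hBq
        exact hcon i hip hiq
      exact hane (a_eq_zero_of_B a hall)
    obtain ⟨j0, hj0p, hj0q, hBj0⟩ := hj0
    refine Set.mem_iUnion.mpr ⟨(c, p, q, j0), ?_⟩
    rw [hA]
    refine ⟨hp, hq, hpq, hj0p, hj0q, ?_, ?_⟩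
    · rw [hca]; exact hBj0
    · rw [hca]; exact hrel
  have hcard : ∀ z, (A z).ncard ≤ n^(m-2) := by
    rintro ⟨c, p, q, j0⟩
    rcases Set.eq_empty_or_nonempty (A (c,p,q,j0)) with he | ⟨t0, ht0⟩
    · rw [he]; simp
    obtain ⟨_, _, hpq, hjp, hjq, hBj, _⟩ := ht0
    set S : Finset (Fin (m+1)) := ({p, q, j0} : Finset (Fin (m+1)))ᶜ with hS
    have hb : (A (c,p,q,j0)).ncard ≤ (Set.univ : Set ({i : Fin (m+1) // i ∈ S} → Fin n)).ncard := by
      apply Set.ncard_le_ncard_of_injOn (fun t (i : {i : Fin (m+1) // i ∈ S}) => t i.1)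
        (fun t _ => Set.mem_univ _) ?_ (Set.toFinite _)
      intro t ht t' ht' hft
      obtain ⟨htp, htq, _, _, _, hBj', hrelt⟩ := ht
      obtain ⟨htp', htq', _, _, _, _, hrelt'⟩ := ht'
      have hoff : ∀ i : Fin (m+1), i ≠ j0 → t i = t' i := by
        intro i hij
        by_cases hip : i = p
        · rw [hip, htp, htp']
        by_cases hiq : i = q
        · rw [hiq, htq, htq']
        have hiS : i ∈ S := by
          rw [hS]
          simp only [Finset.mem_compl, Finset.mem_insert, Finset.mem_singleton, not_or]
          exact ⟨hip, hiq, hij⟩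
        exact congrFun hft ⟨i, hiS⟩
      funext i
      by_cases hij : i = j0
      · subst hij
        have hsum : ∑ i2 : Fin (m+1), B (γ ∘ c) i2 * (x (t i2) - x (t' i2)) = 0 := by
          simp only [mul_sub]
          rw [Finset.sum_sub_distrib, hrelt, hrelt', sub_zero]
        have hsingle := Finset.sum_eq_single_of_mem
          (f := fun i2 => B (γ ∘ c) i2 * (x (t i2) - x (t' i2))) i (Finset.mem_univ i)
          (fun b _ hb => by simp only [hoff b hb, sub_self, mul_zero])
        rw [hsum] at hsingle
        have hxeq : x (t i) = x (t' i) := by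
          rcases mul_eq_zero.mp hsingle.symm with h | h
          · exact absurd h hBj'
          · linarith [sub_eq_zero.mp h]
        exact hx hxeq
      · exact hoff i hij
    refine le_trans hb (le_of_eq ?_)
    rw [Set.ncard_univ, Nat.card_eq_fintype_card, Fintype.card_fun, Fintype.card_fin]
    have hScard : S.card = m - 2 := by
      rw [hS, Finset.card_compl]
      have h3 : ({p, q, j0} : Finset (Fin (m+1))).card = 3 := by
        rw [Finset.card_insert_of_notMem, Finset.card_insert_of_notMem,
          Finset.card_singleton]
        · simp only [Finset.mem_singleton]
          exact fun h => hjq h.symm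
        · simp only [Finset.mem_insert, Finset.mem_singleton, not_or]
          exact ⟨hpq, fun h => hjp h.symm⟩
      rw [h3, Fintype.card_fin]
      omega
    have : Fintype.card {i : Fin (m+1) // i ∈ S} = S.card := Fintype.card_coe S
    rw [this, hScard]
  calc {t : Fin (m+1) → Fin n | Function.Injective t ∧ ContainsBoth u v t ∧
        ¬ CycleReconstructible x t}.ncard
      ≤ (⋃ z, A z).ncard := Set.ncard_le_ncard hsub (Set.toFinite _)
    _ ≤ Fintype.card ((Fin m → Fin 3) × Fin (m+1) × Fin (m+1) × Fin (m+1)) * n^(m-2) :=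
        ncard_iUnion_le_mul A _ hcard
    _ = 3^m * (m+1)^3 * n^(m-2) := by
        simp only [Fintype.card_prod, Fintype.card_fun, Fintype.card_fin]
        ring

set_option maxHeartbeats 1000000 in
lemma tot_card_ge {n m : ℕ} (hm : 1 ≤ m) (u v : Fin n) (huv : u ≠ v) :
    (n-2).descFactorial (m-1) ≤
    {t : Fin (m+1) → Fin n | Function.Injective t ∧ ContainsBoth u v t}.ncard := by
  classical
  set S : Finset (Fin n) := ({u, v} : Finset (Fin n))ᶜ with hS
  set ψ : (Fin (m-1) ↪ (S : Set (Fin n))) → (Fin (m+1) → Fin n) := fun e i =>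
    if h0 : i.val = 0 then u else if h1 : i.val = 1 then v
    else (e ⟨i.val - 2, by have := i.isLt; omega⟩ : (S : Set (Fin n))).val with hψ
  have hmemS : ∀ (e : Fin (m-1) ↪ (S : Set (Fin n))) (z : Fin (m-1)),
      ((e z : (S : Set (Fin n))) : Fin n) ≠ u ∧ ((e z : (S : Set (Fin n))) : Fin n) ≠ v := by
    intro e z
    have h2 := (e z).2
    simp only [hS, Finset.coe_compl, Set.mem_compl_iff, Finset.coe_insert, Set.mem_insert_iff,
      Finset.coe_singleton, Set.mem_singleton_iff, not_or] at h2
    exact h2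
  have hval : ∀ e (i : Fin (m+1)) (h2 : 2 ≤ i.val),
      ψ e i = ((e ⟨i.val - 2, by have := i.isLt; omega⟩ : (S : Set (Fin n))) : Fin n) := by
    intro e i h2
    rw [hψ]
    dsimp only
    rw [dif_neg (by omega), dif_neg (by omega)]
  have hv0 : ∀ e, ψ e ⟨0, by omega⟩ = u := by
    intro e; rw [hψ]; dsimp only; rw [dif_pos rfl]
  have hv1 : ∀ e, ψ e ⟨1, by omega⟩ = v := by
    intro e; rw [hψ]; dsimp only; rw [dif_neg (by omega), dif_pos rfl]
  have hinj : ∀ e, Function.Injective (ψ e) := by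
    intro e i i' hii
    by_cases h0 : i.val = 0
    · by_cases h0' : i'.val = 0
      · exact Fin.ext (by omega)
      · exfalso
        have hl : ψ e i = u := by rw [hψ]; dsimp only; rw [dif_pos h0]
        by_cases h1' : i'.val = 1
        · have hr : ψ e i' = v := by rw [hψ]; dsimp only; rw [dif_neg h0', dif_pos h1']
          exact huv (by rw [← hl, hii, hr])
        · have hr := hval e i' (by omega)
          exact (hmemS e _).1 (by rw [← hr, ← hii, hl])
    · by_cases h1 : i.val = 1
      · by_cases h0' : i'.val = 0
        · exfalso
          have hl : ψ e i = v := by rw [hψ]; dsimp only; rw [dif_neg h0, dif_pos h1]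
          have hr : ψ e i' = u := by rw [hψ]; dsimp only; rw [dif_pos h0']
          exact huv (by rw [← hl, hii, hr])
        · by_cases h1' : i'.val = 1
          · exact Fin.ext (by omega)
          · exfalso
            have hl : ψ e i = v := by rw [hψ]; dsimp only; rw [dif_neg h0, dif_pos h1]
            have hr := hval e i' (by omega)
            exact (hmemS e _).2 (by rw [← hr, ← hii, hl])
      · by_cases h0' : i'.val = 0
        · exfalso
          have hl := hval e i (by omega)
          have hr : ψ e i' = u := by rw [hψ]; dsimp only; rw [dif_pos h0']
          exact (hmemS e _).1 (by rw [← hl, hii, hr])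
        · by_cases h1' : i'.val = 1
          · exfalso
            have hl := hval e i (by omega)
            have hr : ψ e i' = v := by rw [hψ]; dsimp only; rw [dif_neg h0', dif_pos h1']
            exact (hmemS e _).2 (by rw [← hl, hii, hr])
          · have hl := hval e i (by omega)
            have hr := hval e i' (by omega)
            have : (e ⟨i.val - 2, by have := i.isLt; omega⟩)
                = (e ⟨i'.val - 2, by have := i'.isLt; omega⟩) := by
              apply Subtype.ext
              rw [← hl, ← hr, hii]
            have := e.injective this
            have := congrArg Fin.val this
            simp only at this
            exact Fin.ext (by omega)
  have hmain : (Set.univ : Set (Fin (m-1) ↪ (S : Set (Fin n)))).ncard ≤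
      {t : Fin (m+1) → Fin n | Function.Injective t ∧ ContainsBoth u v t}.ncard := by
    apply Set.ncard_le_ncard_of_injOn ψ ?_ ?_ (Set.toFinite _)
    · intro e _
      refine ⟨hinj e, ⟨⟨0, ?_⟩, ⟨⟨1, by omega⟩, hv1 e⟩⟩⟩
      exact hv0 e
    · intro e _ e' _ hee
      apply Function.Embedding.ext
      intro z
      have hz2 : z.val + 2 < m + 1 := by have := z.isLt; omega
      have h1 := hval e ⟨z.val + 2, hz2⟩ (Nat.le_add_left 2 z.val)
      have h2 := hval e' ⟨z.val + 2, hz2⟩ (Nat.le_add_left 2 z.val)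
      have h1' : ψ e ⟨z.val + 2, hz2⟩ = ((e z : (S : Set (Fin n))) : Fin n) := by
        rw [h1]; congr!
      have h2' : ψ e' ⟨z.val + 2, hz2⟩ = ((e' z : (S : Set (Fin n))) : Fin n) := by
        rw [h2]; congr!
      apply Subtype.ext
      rw [← h1', ← h2', hee]
  calc (n-2).descFactorial (m-1)
      = (Set.univ : Set (Fin (m-1) ↪ (S : Set (Fin n)))).ncard := by
        rw [Set.ncard_univ, Nat.card_eq_fintype_card, Fintype.card_embedding_eq]
        congr 1
        · rw [show Fintype.card (S : Set (Fin n)) = S.card from Fintype.card_coe S, hS,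
            Finset.card_compl, Fintype.card_fin]
          congr 1
          rw [Finset.card_insert_of_notMem (by simpa using huv), Finset.card_singleton]
        · rw [Fintype.card_fin]
    _ ≤ _ := hmain

lemma ev_poly_log (C : ℝ) (s : ℕ) {r : ℝ} (hr : 0 < r) :
    ∀ᶠ N : ℝ in Filter.atTop, C * (Real.log N)^s ≤ N ^ r := by
  have h := isLittleO_log_rpow_rpow_atTop (s := r) (s : ℝ) hr
  have hc : (0:ℝ) < 1 / (max C 1) := by positivity
  filter_upwards [h.def hc, Filter.eventually_ge_atTop (1:ℝ)] with N h1 h2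
  have hL0 : 0 ≤ Real.log N := Real.log_nonneg h2
  have hN0 : (0:ℝ) ≤ N := by linarith
  rw [Real.norm_eq_abs, Real.norm_eq_abs, abs_of_nonneg (Real.rpow_nonneg hL0 _),
    abs_of_nonneg (Real.rpow_nonneg hN0 _), Real.rpow_natCast] at h1
  have hmax : C ≤ max C 1 := le_max_left _ _
  have hmax0 : (0:ℝ) < max C 1 := lt_of_lt_of_le one_pos (le_max_right _ _)
  calc C * (Real.log N)^s ≤ (max C 1) * (Real.log N)^s :=
        mul_le_mul_of_nonneg_right hmax (pow_nonneg hL0 _)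
    _ ≤ (max C 1) * (1/(max C 1) * N ^ r) := mul_le_mul_of_nonneg_left h1 hmax0.le
    _ = N ^ r := by field_simp

lemma exp_bound : (3:ℝ) ≤ Real.exp 1.1 := by
  have h1 : (2.7182818283:ℝ) < Real.exp 1 := Real.exp_one_gt_d9
  have h2 : (1.025:ℝ) ≤ Real.exp 0.025 := by
    have := Real.add_one_le_exp (0.025:ℝ); linarith
  have h4 : ((1.025:ℝ))^(4:ℕ) ≤ (Real.exp 0.025)^(4:ℕ) :=
    pow_le_pow_left₀ (by norm_num) h2 4
  have h5 : (Real.exp 0.025)^(4:ℕ) = Real.exp 0.1 := by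
    rw [← Real.exp_nat_mul]; norm_num
  have h6 : Real.exp 1.1 = Real.exp 1 * Real.exp 0.1 := by
    rw [← Real.exp_add]; norm_num
  have h7 : (2.7182818283:ℝ) * ((1.025:ℝ))^(4:ℕ) ≤ Real.exp 1 * (Real.exp 0.025)^(4:ℕ) := by
    apply mul_le_mul h1.le h4 (by norm_num) (Real.exp_pos 1).le
  rw [h6, ← h5]
  nlinarith [h7]

end Stmt9

set_option maxHeartbeats 2000000 in
open Stmt9 in
/-- There are at most `n ^ (2 - 0.004)` useless unordered pairs of distinct indices. -/
theorem statement9 :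
    ∃ n₀ : ℕ, ∀ n : ℕ, n₀ ≤ n → ∀ x : Fin n → ℝ, Function.Injective x →
      (({e : Sym2 (Fin n) | ∃ u v : Fin n, e = s(u, v) ∧ u ≠ v ∧ Useless x u v}.ncard : ℝ))
        ≤ (n : ℝ) ^ ((2 : ℝ) - 0.004) := by
  have hev : ∀ᶠ N : ℝ in Filter.atTop,
      (3 ≤ N ∧ 1.62 * (Real.log N)^2 ≤ N ^ (1:ℝ)) ∧
      (1.458 * (Real.log N)^3 ≤ N ^ ((0.005:ℝ)) ∧ 0.9 * (Real.log N)^1 ≤ N ^ (1:ℝ)) :=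
    ((Filter.eventually_ge_atTop 3).and (ev_poly_log 1.62 2 one_pos)).and
      ((ev_poly_log 1.458 3 (by norm_num)).and (ev_poly_log 0.9 1 one_pos))
  have hevN : ∀ᶠ n : ℕ in Filter.atTop,
      (3 ≤ (n:ℝ) ∧ 1.62 * (Real.log (n:ℝ))^2 ≤ (n:ℝ) ^ (1:ℝ)) ∧
      (1.458 * (Real.log (n:ℝ))^3 ≤ (n:ℝ) ^ ((0.005:ℝ)) ∧
        0.9 * (Real.log (n:ℝ))^1 ≤ (n:ℝ) ^ (1:ℝ)) :=
    tendsto_natCast_atTop_atTop.eventually hev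
  obtain ⟨n₀, hn₀⟩ := Filter.eventually_atTop.mp hevN
  refine ⟨n₀, fun n hn x hx => ?_⟩
  obtain ⟨⟨h3, hc2⟩, hc3, hc4⟩ := hn₀ n hn
  have hNpos : (0:ℝ) < (n:ℝ) := by linarith
  have hempty : {e : Sym2 (Fin n) | ∃ u v : Fin n, e = s(u,v) ∧ u ≠ v ∧ Useless x u v} = ∅ := by
    rw [Set.eq_empty_iff_forall_notMem]
    rintro e ⟨u, v, -, huv, k, hk2, hk9, hbad⟩
    rw [pow_one, Real.rpow_one] at hc4
    have hL0 : (0:ℝ) ≤ Real.log (n:ℝ) := Real.log_nonneg (by linarith)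
    by_cases hk3 : k ≤ 3
    · -- small k : every tuple is cycle-reconstructible
      have hzero : ({t : Fin k → Fin n | Function.Injective t ∧ ContainsBoth u v t ∧
          ¬ CycleReconstructible x t}) = ∅ := by
        rw [Set.eq_empty_iff_forall_notMem]
        rintro t ⟨-, -, hcr⟩
        exact hcr (cr_of_le_three x t hk3)
      have hbad' : (n : ℝ) ^ (-(0.005 : ℝ)) *
          ({t : Fin k → Fin n | Function.Injective t ∧ ContainsBoth u v t}.ncard : ℝ)
          < (({t : Fin k → Fin n | Function.Injective t ∧ ContainsBoth u v t ∧
            ¬ CycleReconstructible x t}.ncard : ℝ)) := hbad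
      rw [hzero, Set.ncard_empty, Nat.cast_zero] at hbad'
      have hpos : (0:ℝ) ≤ (n : ℝ) ^ (-(0.005 : ℝ)) *
          ({t : Fin k → Fin n | Function.Injective t ∧ ContainsBoth u v t}.ncard : ℝ) := by
        positivity
      linarith
    · push_neg at hk3
      obtain ⟨m, rfl⟩ : ∃ m, k = m + 1 := ⟨k - 1, by omega⟩
      have hm : 3 ≤ m := by omega
      have hkN : (m:ℝ) + 1 ≤ 0.9 * Real.log (n:ℝ) := by push_cast at hk9; linarith
      have hkn : m + 1 ≤ n := by
        have hr : ((m:ℝ)+1) ≤ (n:ℝ) := by linarith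
        exact_mod_cast hr
      have hn3 : 3 ≤ n := by exact_mod_cast h3
      -- the two counting bounds
      have hup := bad_card_le (m := m) x hx u v huv
      have hlo := tot_card_ge (n := n) (by omega : 1 ≤ m) u v huv
      set T := ({t : Fin (m+1) → Fin n | Function.Injective t ∧ ContainsBoth u v t}.ncard : ℝ)
        with hT
      set Bc := ({t : Fin (m+1) → Fin n | Function.Injective t ∧ ContainsBoth u v t ∧
          ¬ CycleReconstructible x t}.ncard : ℝ) with hBc
      have hbad' : (n : ℝ) ^ (-(0.005 : ℝ)) * T < Bc := hbad
      have hd : (n - m)^(m-1) ≤ (n-2).descFactorial (m-1) := by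
        have h := Nat.pow_sub_le_descFactorial (n-2) (m-1)
        have he : n - 2 + 1 - (m - 1) = n - m := by omega
        rwa [he] at h
      have h1 : ((n - m : ℕ):ℝ)^(m-1:ℕ) ≤ T := by
        rw [hT]
        exact_mod_cast le_trans hd hlo
      have h2 : Bc ≤ (3:ℝ)^m * ((m:ℝ)+1)^3 * (n:ℝ)^(m-2:ℕ) := by
        rw [hBc]
        have := (Nat.cast_le (α := ℝ)).mpr hup
        push_cast at this
        convert this using 2 <;> push_cast <;> ring
      have hcast : ((n - m : ℕ):ℝ) = (n:ℝ) - m := by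
        rw [Nat.cast_sub (by omega : m ≤ n)]
      -- Bernoulli-type lower bound
      have hmN : (m:ℝ) ≤ (n:ℝ) := by
        have : (m:ℕ) ≤ n := by omega
        exact_mod_cast this
      have hbern : (n:ℝ)^(m-1:ℕ) * (1/2) ≤ ((n:ℝ) - m)^(m-1:ℕ) := by
        have ha : (-2:ℝ) ≤ -((m:ℝ)/(n:ℝ)) := by
          have : (m:ℝ)/(n:ℝ) ≤ 1 := by
            rw [div_le_one hNpos]; exact hmN
          linarith
        have hmono := one_add_mul_le_pow ha (m-1)
        have hdiv : (1:ℝ) + -((m:ℝ)/(n:ℝ)) = ((n:ℝ) - m)/(n:ℝ) := by field_simp; ring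
        have hhalf : (1:ℝ)/2 ≤ 1 + ((m-1:ℕ):ℝ) * (-((m:ℝ)/(n:ℝ))) := by
          have hm1 : ((m-1:ℕ):ℝ) ≤ (m:ℝ) := by exact_mod_cast Nat.sub_le m 1
          have hm0 : (0:ℝ) ≤ ((m-1:ℕ):ℝ) := Nat.cast_nonneg _
          have hq : ((m-1:ℕ):ℝ) * (m:ℝ) ≤ (0.9 * Real.log (n:ℝ))^2 := by nlinarith
          have hq2 : (0.9 * Real.log (n:ℝ))^2 ≤ (n:ℝ)/2 := by
            rw [Real.rpow_one] at hc2; nlinarith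
          have h0 : ((m-1:ℕ):ℝ) * (m:ℝ) ≤ (n:ℝ)/2 := le_trans hq hq2
          have he : ((m-1:ℕ):ℝ) * (-((m:ℝ)/(n:ℝ))) = -((((m-1:ℕ):ℝ) * (m:ℝ))/(n:ℝ)) := by
            ring
          rw [he]
          have : (((m-1:ℕ):ℝ) * (m:ℝ))/(n:ℝ) ≤ 1/2 := by
            rw [div_le_iff₀ hNpos]; linarith only [h0]
          linarith
        have h' : (1:ℝ)/2 ≤ (((n:ℝ) - m)/(n:ℝ))^(m-1:ℕ) := by
          rw [← hdiv]; linarith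
        have hNpow : (0:ℝ) < (n:ℝ)^(m-1:ℕ) := pow_pos hNpos _
        calc (n:ℝ)^(m-1:ℕ) * (1/2) ≤ (n:ℝ)^(m-1:ℕ) * ((((n:ℝ) - m)/(n:ℝ))^(m-1:ℕ)) :=
              mul_le_mul_of_nonneg_left h' hNpow.le
          _ = ((n:ℝ) - m)^(m-1:ℕ) := by
              rw [div_pow, mul_comm, div_mul_cancel₀ _ hNpow.ne']
      have hr0 : (0:ℝ) ≤ (n:ℝ) ^ (-(0.005:ℝ)) := Real.rpow_nonneg hNpos.le _
      have hmain : (n:ℝ) ^ (-(0.005:ℝ)) * ((n:ℝ)^(m-1:ℕ) * (1/2))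
          < (3:ℝ)^m * ((m:ℝ)+1)^3 * (n:ℝ)^(m-2:ℕ) := by
        calc (n:ℝ) ^ (-(0.005:ℝ)) * ((n:ℝ)^(m-1:ℕ) * (1/2))
            ≤ (n:ℝ) ^ (-(0.005:ℝ)) * (((n:ℝ) - m)^(m-1:ℕ)) :=
              mul_le_mul_of_nonneg_left hbern hr0
          _ ≤ (n:ℝ) ^ (-(0.005:ℝ)) * T := by
              apply mul_le_mul_of_nonneg_left _ hr0
              rw [← hcast]
              exact h1
          _ < Bc := hbad'
          _ ≤ _ := h2
      have hpow : (n:ℝ)^(m-1:ℕ) = (n:ℝ)^(m-2:ℕ) * (n:ℝ) := by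
        rw [← pow_succ]
        congr 1
        omega
      have hstar : (n:ℝ) ^ (-(0.005:ℝ)) * (n:ℝ) * (1/2) < (3:ℝ)^m * ((m:ℝ)+1)^3 := by
        have hNpow2 : (0:ℝ) < (n:ℝ)^(m-2:ℕ) := pow_pos hNpos _
        have h' : ((n:ℝ) ^ (-(0.005:ℝ)) * (n:ℝ) * (1/2)) * (n:ℝ)^(m-2:ℕ)
            < ((3:ℝ)^m * ((m:ℝ)+1)^3) * (n:ℝ)^(m-2:ℕ) := by
          calc ((n:ℝ) ^ (-(0.005:ℝ)) * (n:ℝ) * (1/2)) * (n:ℝ)^(m-2:ℕ)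
              = (n:ℝ) ^ (-(0.005:ℝ)) * (((n:ℝ)^(m-2:ℕ) * (n:ℝ)) * (1/2)) := by ring
            _ = (n:ℝ) ^ (-(0.005:ℝ)) * ((n:ℝ)^(m-1:ℕ) * (1/2)) := by rw [← hpow]
            _ < (3:ℝ)^m * ((m:ℝ)+1)^3 * (n:ℝ)^(m-2:ℕ) := hmain
        exact lt_of_mul_lt_mul_right h' hNpow2.le
      -- bound the right-hand side
      have hA : (3:ℝ)^m ≤ (n:ℝ)^(0.99:ℝ) * (1/3) := by
        calc (3:ℝ)^m ≤ (Real.exp 1.1)^m := pow_le_pow_left₀ (by norm_num) exp_bound m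
          _ = Real.exp ((m:ℕ) * 1.1) := (Real.exp_nat_mul 1.1 m).symm
          _ ≤ Real.exp (0.99 * Real.log (n:ℝ) - 1.1) := by
              apply Real.exp_le_exp.mpr
              nlinarith [hkN]
          _ = Real.exp (0.99 * Real.log (n:ℝ)) / Real.exp 1.1 := Real.exp_sub _ _
          _ ≤ Real.exp (0.99 * Real.log (n:ℝ)) / 3 := by
              apply div_le_div_of_nonneg_left (Real.exp_pos _).le (by norm_num) exp_bound
          _ = (n:ℝ)^(0.99:ℝ) * (1/3) := by
              rw [Real.rpow_def_of_pos hNpos, mul_comm (Real.log (n:ℝ))]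
              ring
      have hB : ((m:ℝ)+1)^3 ≤ (n:ℝ)^((0.005:ℝ)) * (1/2) := by
        have h0 : ((m:ℝ)+1)^3 ≤ (0.9 * Real.log (n:ℝ))^3 :=
          pow_le_pow_left₀ (by positivity) hkN 3
        nlinarith [hc3]
      have hfin : (n:ℝ) ^ (-(0.005:ℝ)) * (n:ℝ) * (1/2)
          < ((n:ℝ)^(0.99:ℝ) * (1/3)) * ((n:ℝ)^((0.005:ℝ)) * (1/2)) :=
        lt_of_lt_of_le hstar (mul_le_mul hA hB (by positivity) (by positivity))
      have hL' : (n:ℝ) ^ (-(0.005:ℝ)) * (n:ℝ) = (n:ℝ)^(0.995:ℝ) := by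
        have h := Real.rpow_add hNpos (-(0.005:ℝ)) 1
        rw [Real.rpow_one] at h
        rw [← h]
        norm_num
      have hR' : (n:ℝ)^(0.99:ℝ) * (n:ℝ)^((0.005:ℝ)) = (n:ℝ)^(0.995:ℝ) := by
        rw [← Real.rpow_add hNpos]
        norm_num
      rw [hL'] at hfin
      have hp : (0:ℝ) < (n:ℝ)^(0.995:ℝ) := Real.rpow_pos_of_pos hNpos _
      nlinarith [hfin, hR', hp]
  rw [hempty]
  simp only [Set.ncard_empty, Nat.cast_zero]
  exact Real.rpow_nonneg hNpos.le _
end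

section
/- For every sequence of injective maps x_n : Fin n → ℝ and every sequence of probabilities p_n ∈ [0,1], if the revealed set P is distributed as the random graph G(n, p_n), then the probability that at most n^{2−0.002} unordered pairs {u,v} of distinct indices are simultaneously close and useful but not deducible tends to 1 as n → ∞. -/
/-- The product Bernoulli measure on indicator functions of the unordered pairs of distinct
indices of `Fin n`: each pair is revealed independently with probability `p`. -/
noncomputable def gnpMeasure (n : ℕ) (p : ℝ) :
    MeasureTheory.Measure ({e : Sym2 (Fin n) // ¬ e.IsDiag} → Bool) :=
  MeasureTheory.Measure.pi fun _ =>
    (PMF.bernoulli (min (Real.toNNReal p) 1) (min_le_right _ _)).toMeasure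

/-- The set of revealed pairs determined by a sample point `ω`. -/
def revealedSet {n : ℕ} (ω : {e : Sym2 (Fin n) // ¬ e.IsDiag} → Bool) : Set (Sym2 (Fin n)) :=
  {e | ∃ h : ¬ e.IsDiag, ω ⟨e, h⟩ = true}

/-- `u` and `v` lie together on a cycle of length at most `m` in the graph `G`. -/
def OnShortCycle {n : ℕ} (G : SimpleGraph (Fin n)) (m : ℝ) (u v : Fin n) : Prop :=
  ∃ c : G.Walk u u, c.IsCycle ∧ (c.length : ℝ) ≤ m ∧ v ∈ c.support

/-- The distance between `u` and `v` is determined by the revealed distances `P`. -/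
def Deducible {n : ℕ} (x : Fin n → ℝ) (P : Set (Sym2 (Fin n))) (u v : Fin n) : Prop :=
  ∀ w : Fin n → ℝ, Function.Injective w →
    (∀ i j : Fin n, s(i, j) ∈ P → |w i - w j| = |x i - x j|) →
    |w u - w v| = |x u - x v|

/-!
Fix a pair `u ≠ v`. Relabelling the vertices by a permutation fixing `u` and `v` preserves the
law of `G(n, p)`. Suppose some relabelling makes `{u, v}` close, useful and not deducible; its
short cycle gives an injective tuple `t₀` through `u` and `v`. For every other relabelling `π`
with the same outcome, `π • t₀` runs around a cycle of the relabelled graph, so it cannot be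
cycle-reconstructible, or the distance would be deducible. As `π` ranges over the stabiliser of
`u` and `v`, the tuple `π • t₀` is equidistributed on the injective tuples with `u` and `v` in
the same positions. Usefulness therefore bounds the fraction of such `π` by
`n ^ (-0.005) k² ≤ n ^ (-0.005) (0.9 log n)²`, and averaging over relabellings bounds the
probability of each pair by the same quantity. Markov's inequality over the `n²` ordered pairs
finishes, because `n² · n ^ (-0.005) log² n = o(n ^ 1.998)`.
-/

open Function MeasureTheory MulAction
open scoped ENNReal

theorem MulAction.card_smul_mem_mul_card_orbit {G X : Type*} [Group G] [MulAction G X]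
    (b : X) (A : Set X) :
    Nat.card {g : G // g • b ∈ A} * Nat.card (orbit G b) =
      Nat.card G * Nat.card {y : orbit G b // (y : X) ∈ A} := by
  have hsplit : {g : G // g • b ∈ A} ≃ {y : orbit G b // (y : X) ∈ A} × stabilizer G b :=
    ((orbitProdStabilizerEquivGroup G b).symm.subtypeEquiv (q := fun z => (z.1 : X) ∈ A)
      fun _ => Iff.rfl).trans
      (Equiv.prodSubtypeFstEquivSubtypeProd (α := orbit G b) (β := stabilizer G b)
        (p := fun y => (y : X) ∈ A))
  rw [Nat.card_congr hsplit, ← Nat.card_congr (orbitProdStabilizerEquivGroup G b),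
    Nat.card_prod, Nat.card_prod]
  ring

theorem MeasureTheory.measure_le_of_forall_card_le {Ω ι : Type*} [MeasurableSpace Ω]
    {μ : Measure Ω} [IsProbabilityMeasure μ] [Finite ι] [Nonempty ι] {f : ι → Ω → Ω}
    (hf : ∀ i, MeasurePreserving (f i) μ μ) {B : Set Ω} (hB : MeasurableSet B) {c : ℝ≥0∞}
    (hc : ∀ ω, (Nat.card {i // f i ω ∈ B} : ℝ≥0∞) ≤ c * Nat.card ι) : μ B ≤ c := by
  classical
  have := Fintype.ofFinite ι
  have hcount : ∀ ω, (Nat.card {i // f i ω ∈ B} : ℝ≥0∞) = ∑ i, B.indicator 1 (f i ω) := by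
    intro ω
    simp [Nat.card_eq_fintype_card, Fintype.card_subtype, Set.indicator_apply]
  have hsum : (Nat.card ι : ℝ≥0∞) * μ B ≤ c * Nat.card ι :=
    calc (Nat.card ι : ℝ≥0∞) * μ B = ∑ i, μ (f i ⁻¹' B) := by
          simp [(hf _).measure_preimage hB.nullMeasurableSet, Nat.card_eq_fintype_card]
      _ = ∑ i, ∫⁻ ω, B.indicator 1 (f i ω) ∂μ := by
          refine Finset.sum_congr rfl fun i _ => ?_
          rw [← lintegral_indicator_one (hB.preimage (hf i).measurable)]
          rfl
      _ = ∫⁻ ω, ∑ i, B.indicator 1 (f i ω) ∂μ :=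
          (lintegral_finsetSum _ fun i _ =>
            (measurable_one.indicator hB).comp (hf i).measurable).symm
      _ ≤ ∫⁻ _, c * Nat.card ι ∂μ := lintegral_mono fun ω => hcount ω ▸ hc ω
      _ = c * Nat.card ι := by simp
  rw [mul_comm c] at hsum
  exact (ENNReal.mul_le_mul_iff_right (by simp) (by simp)).1 hsum

theorem MeasureTheory.mul_meas_ge_ncard_le_sum {Ω ι : Type*} [MeasurableSpace Ω]
    (μ : Measure Ω) [Fintype ι] {E : ι → Set Ω} (hE : ∀ i, MeasurableSet (E i)) (a : ℝ≥0∞) :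
    a * μ {ω | a ≤ {i | ω ∈ E i}.ncard} ≤ ∑ i, μ (E i) := by
  classical
  have hcount : ∀ ω, ({i | ω ∈ E i}.ncard : ℝ≥0∞) = ∑ i, (E i).indicator 1 ω := by
    intro ω
    rw [Set.ncard_eq_toFinset_card', Set.toFinset_ofPred]
    simp [Set.indicator_apply]
  simp_rw [hcount]
  calc a * μ {ω | a ≤ ∑ i, (E i).indicator 1 ω}
      ≤ ∫⁻ ω, ∑ i, (E i).indicator 1 ω ∂μ :=
        mul_meas_ge_le_lintegral₀ (Finset.measurable_sum _ fun i _ =>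
          measurable_one.indicator (hE i)).aemeasurable a
    _ = ∑ i, μ (E i) := by
        rw [lintegral_finsetSum _ fun i _ => measurable_one.indicator (hE i)]
        simp_rw [lintegral_indicator_one (hE _)]

def IsCyclicTuple {V : Type*} (P : Set (Sym2 V)) {k : ℕ} (t : Fin k → V) : Prop :=
  Injective t ∧
    (∀ (j : ℕ) (h : j + 1 < k), s(t ⟨j + 1, h⟩, t ⟨j, Nat.lt_of_succ_lt h⟩) ∈ P) ∧
    ∀ h : 0 < k, s(t ⟨0, h⟩, t ⟨k - 1, Nat.sub_lt h Nat.one_pos⟩) ∈ P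

theorem IsCyclicTuple.deducible {n k : ℕ} {x : Fin n → ℝ} {P : Set (Sym2 (Fin n))}
    {t : Fin k → Fin n} (ht : IsCyclicTuple P t) (hrec : CycleReconstructible x t)
    {a b : Fin k} {u v : Fin n} (ha : t a = u) (hb : t b = v) : Deducible x P u v := by
  intro w _ hw
  have := hrec (w ∘ t) (fun j hj => hw _ _ (ht.2.1 j hj)) (fun hk => hw _ _ (ht.2.2 hk)) a b
  simpa only [comp_apply, ha, hb] using this

theorem OnShortCycle.exists_isCyclicTuple {n : ℕ} {P : Set (Sym2 (Fin n))} {m : ℝ}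
    {u v : Fin n} (h : OnShortCycle (SimpleGraph.fromEdgeSet P) m u v) (huv : u ≠ v) :
    ∃ (k : ℕ) (t : Fin k → Fin n) (a b : Fin k),
      3 ≤ k ∧ (k : ℝ) ≤ m ∧ IsCyclicTuple P t ∧ t a = u ∧ t b = v := by
  obtain ⟨c, hc, hlen, hv⟩ := h
  have h3 := hc.three_le_length
  obtain ⟨i, rfl, hi⟩ := c.mem_support_iff_exists_getVert.1 hv
  have hi0 : i ≠ 0 := by rintro rfl; exact huv c.getVert_zero.symm
  -- The cycle is read from its second vertex on, so that `u` sits at the last position.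
  refine ⟨c.length, fun j => c.getVert (j + 1), ⟨c.length - 1, by omega⟩,
    ⟨i - 1, by omega⟩, h3, hlen, ⟨fun j j' hjj' => ?_, fun j hj => ?_, fun _ => ?_⟩, ?_, ?_⟩
  · have := hc.getVert_injOn (by simp) (by simp) hjj'
    exact Fin.ext (by omega)
  · have := c.adj_getVert_succ (i := j + 1) (by omega)
    rw [SimpleGraph.fromEdgeSet_adj, Sym2.eq_swap] at this
    exact this.1
  · have := c.adj_getVert_succ (i := 0) (by omega)
    rw [SimpleGraph.fromEdgeSet_adj, Sym2.eq_swap] at this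
    simpa [Nat.sub_add_cancel (by omega : 1 ≤ c.length)] using this.1
  · simp [Nat.sub_add_cancel (by omega : 1 ≤ c.length)]
  · simp [Nat.sub_add_cancel (Nat.one_le_iff_ne_zero.2 hi0)]

abbrev Outcome (n : ℕ) : Type := {e : Sym2 (Fin n) // ¬ e.IsDiag} → Bool

def Equiv.Perm.nonDiag {α : Type*} (π : Equiv.Perm α) :
    Equiv.Perm {e : Sym2 α // ¬ e.IsDiag} :=
  Equiv.subtypeEquiv
    { toFun := Sym2.map π, invFun := Sym2.map π.symm,
      left_inv := fun e => by simp [Sym2.map_map],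
      right_inv := fun e => by simp [Sym2.map_map] }
    fun _ => not_congr (Sym2.isDiag_map π.injective).symm

def relabel {n : ℕ} (π : Equiv.Perm (Fin n)) : Outcome n ≃ᵐ Outcome n :=
  MeasurableEquiv.piCongrLeft (fun _ => Bool) π.nonDiag

theorem measurePreserving_relabel {n : ℕ} (p : ℝ) (π : Equiv.Perm (Fin n)) :
    MeasurePreserving (relabel π) (gnpMeasure n p) (gnpMeasure n p) :=
  measurePreserving_piCongrLeft (fun _ => _) π.nonDiag

theorem mk_mem_revealedSet_relabel {n : ℕ} (π : Equiv.Perm (Fin n)) (ω : Outcome n)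
    (i j : Fin n) : s(π i, π j) ∈ revealedSet (relabel π ω) ↔ s(i, j) ∈ revealedSet ω := by
  simp [revealedSet, relabel, Equiv.Perm.nonDiag, MeasurableEquiv.coe_piCongrLeft,
    Equiv.piCongrLeft_apply_eq_cast]

theorem isCyclicTuple_relabel_iff {n k : ℕ} (π : Equiv.Perm (Fin n)) (ω : Outcome n)
    (t : Fin k → Fin n) :
    IsCyclicTuple (revealedSet (relabel π ω)) (π • t) ↔ IsCyclicTuple (revealedSet ω) t := by
  simp only [IsCyclicTuple, Pi.smul_apply, Equiv.Perm.smul_def, mk_mem_revealedSet_relabel]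
  rw [show (π • t : Fin k → Fin n) = π ∘ t from rfl, π.injective.of_comp_iff]

def tuplesThrough {ι α : Type*} (a b : ι) (u v : α) : Set (ι → α) :=
  {t | Injective t ∧ t a = u ∧ t b = v}

theorem tuplesThrough_subset_orbit {ι α : Type*} [Finite ι] {t₀ : ι → α}
    (ht₀ : Injective t₀) {a b : ι} {u v : α} (ha : t₀ a = u) (hb : t₀ b = v) :
    tuplesThrough a b u v ⊆ orbit (fixingSubgroup (Equiv.Perm α) {u, v}) t₀ := by
  rintro t ⟨ht, hta, htb⟩
  obtain ⟨σ, hσ⟩ := Equiv.Perm.exists_extending_pair t₀ t ht₀ ht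
  have hσ_fix : σ ∈ fixingSubgroup (Equiv.Perm α) {u, v} := by
    rw [mem_fixingSubgroup_iff]
    rintro y (rfl | rfl)
    · simpa [ha, hta] using hσ a
    · simpa [hb, htb] using hσ b
  exact ⟨⟨σ, hσ_fix⟩, funext hσ⟩

theorem ncard_injective_containsBoth_le {n k : ℕ} {u v : Fin n} (huv : u ≠ v) {a b : Fin k}
    (hab : a ≠ b) :
    {t : Fin k → Fin n | Injective t ∧ ContainsBoth u v t}.ncard ≤
      k ^ 2 * (tuplesThrough a b u v).ncard := by
  have hcover : {t : Fin k → Fin n | Injective t ∧ ContainsBoth u v t} ⊆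
      ⋃ ij : Fin k × Fin k, tuplesThrough ij.1 ij.2 u v := by
    rintro t ⟨ht, ⟨i, hi⟩, ⟨j, hj⟩⟩
    exact Set.mem_iUnion.2 ⟨(i, j), ht, hi, hj⟩
  -- Precomposing with a permutation of positions moves `(i, j)` to `(a, b)`.
  have hle : ∀ ij : Fin k × Fin k,
      (tuplesThrough ij.1 ij.2 u v).ncard ≤ (tuplesThrough a b u v).ncard := by
    rintro ⟨i, j⟩
    rcases eq_or_ne i j with rfl | hij
    · have hempty : tuplesThrough i i u v = ∅ :=
        Set.eq_empty_of_forall_notMem fun t ⟨_, hu, hv⟩ => huv (hu.symm.trans hv)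
      simp [hempty]
    · obtain ⟨τ, hτa, hτb⟩ :=
        is_two_pretransitive_iff.1 (Equiv.Perm.isMultiplyPretransitive (Fin k) 2) hab hij
      refine Set.ncard_le_ncard_of_injOn (fun t => t ∘ τ) ?_
        τ.surjective.injective_comp_right.injOn
      rintro t ⟨ht, hti, htj⟩
      exact ⟨ht.comp τ.injective, by simpa [← hτa] using hti, by simpa [← hτb] using htj⟩
  calc {t : Fin k → Fin n | Injective t ∧ ContainsBoth u v t}.ncard
      ≤ (⋃ ij : Fin k × Fin k, tuplesThrough ij.1 ij.2 u v).ncard := Set.ncard_le_ncard hcover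
    _ ≤ ∑ ij : Fin k × Fin k, (tuplesThrough ij.1 ij.2 u v).ncard :=
        Set.ncard_iUnion_le_of_fintype _
    _ ≤ ∑ _ij : Fin k × Fin k, (tuplesThrough a b u v).ncard :=
        Finset.sum_le_sum fun ij _ => hle ij
    _ = k ^ 2 * (tuplesThrough a b u v).ncard := by simp [sq]

theorem card_smul_mem_not_cycleReconstructible_le {n k : ℕ} {x : Fin n → ℝ} {u v : Fin n}
    (huv : u ≠ v) {t₀ : Fin k → Fin n} (ht₀ : Injective t₀) {a b : Fin k} (ha : t₀ a = u)
    (hb : t₀ b = v) (hgood : ¬ KBad x k u v) :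
    (Nat.card {h : fixingSubgroup (Equiv.Perm (Fin n)) {u, v} // h • t₀ ∈
        {t | Injective t ∧ ContainsBoth u v t ∧ ¬ CycleReconstructible x t}} : ℝ) ≤
      (n : ℝ) ^ (-(0.005 : ℝ)) * k ^ 2 * Nat.card (fixingSubgroup (Equiv.Perm (Fin n)) {u, v}) := by
  set H := fixingSubgroup (Equiv.Perm (Fin n)) {u, v}
  set A := {t : Fin k → Fin n | Injective t ∧ ContainsBoth u v t ∧ ¬ CycleReconstructible x t}
  have hab : a ≠ b := fun h => huv (by rw [← ha, ← hb, h])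
  have hFO : ((tuplesThrough a b u v).ncard : ℝ) ≤ Nat.card (orbit H t₀) := by
    rw [Nat.card_coe_set_eq]
    exact_mod_cast Set.ncard_le_ncard (tuplesThrough_subset_orbit ht₀ ha hb)
  have hO : (0 : ℝ) < Nat.card (orbit H t₀) := by
    have : Nonempty (orbit H t₀) := ⟨⟨t₀, mem_orbit_self t₀⟩⟩
    exact_mod_cast Nat.card_pos
  have hAO : Nat.card {y : orbit H t₀ // (y : Fin k → Fin n) ∈ A} ≤ A.ncard := by
    rw [← Nat.card_coe_set_eq]
    exact Nat.card_le_card_of_injective (fun y => ⟨y.1, y.2⟩)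
      fun y y' h => Subtype.ext (Subtype.ext (congrArg Subtype.val h :))
  have horbit : (Nat.card {h : H // h • t₀ ∈ A} : ℝ) * Nat.card (orbit H t₀) =
      Nat.card H * Nat.card {y : orbit H t₀ // (y : Fin k → Fin n) ∈ A} := by
    exact_mod_cast card_smul_mem_mul_card_orbit (G := H) t₀ A
  have hA : (A.ncard : ℝ) ≤ (n : ℝ) ^ (-(0.005 : ℝ)) *
      {t : Fin k → Fin n | Injective t ∧ ContainsBoth u v t}.ncard := not_lt.1 hgood
  have hF : ({t : Fin k → Fin n | Injective t ∧ ContainsBoth u v t}.ncard : ℝ) ≤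
      k ^ 2 * (tuplesThrough a b u v).ncard := by
    exact_mod_cast ncard_injective_containsBoth_le huv hab
  refine le_of_mul_le_mul_right ?_ hO
  calc (Nat.card {h : H // h • t₀ ∈ A} : ℝ) * Nat.card (orbit H t₀)
      ≤ Nat.card H * A.ncard := by rw [horbit]; gcongr
    _ ≤ Nat.card H * ((n : ℝ) ^ (-(0.005 : ℝ)) * (k ^ 2 * Nat.card (orbit H t₀))) := by
        refine mul_le_mul_of_nonneg_left (hA.trans ?_) (Nat.cast_nonneg _)
        gcongr
        exact hF.trans (by gcongr)
    _ = (n : ℝ) ^ (-(0.005 : ℝ)) * k ^ 2 * Nat.card H * Nat.card (orbit H t₀) := by ring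

def CloseUsefulUndeducible {n : ℕ} (x : Fin n → ℝ) (P : Set (Sym2 (Fin n))) (u v : Fin n) :
    Prop :=
  OnShortCycle (SimpleGraph.fromEdgeSet P) (0.9 * Real.log n) u v ∧
    ¬ Useless x u v ∧ ¬ Deducible x P u v

theorem card_relabel_closeUsefulUndeducible_le {n : ℕ} (x : Fin n → ℝ) (ω : Outcome n)
    {u v : Fin n} (huv : u ≠ v) :
    (Nat.card {h : fixingSubgroup (Equiv.Perm (Fin n)) {u, v} //
        CloseUsefulUndeducible x (revealedSet (relabel h ω)) u v} : ℝ) ≤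
      (n : ℝ) ^ (-(0.005 : ℝ)) * (0.9 * Real.log n) ^ 2 *
        Nat.card (fixingSubgroup (Equiv.Perm (Fin n)) {u, v}) := by
  set H := fixingSubgroup (Equiv.Perm (Fin n)) {u, v}
  rcases isEmpty_or_nonempty {h : H // CloseUsefulUndeducible x (revealedSet (relabel h ω)) u v}
    with _ | ⟨⟨h₀, hclose, huseful, -⟩⟩
  · rw [Nat.card_of_isEmpty, Nat.cast_zero]
    positivity
  obtain ⟨k, t₁, a, b, hk, hkm, ht₁, ha₁, hb₁⟩ := hclose.exists_isCyclicTuple huv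
  set t₀ := h₀⁻¹ • t₁
  have ht₀ : IsCyclicTuple (revealedSet ω) t₀ :=
    (isCyclicTuple_relabel_iff h₀ ω t₀).1 (by simpa [t₀, Subgroup.smul_def] using ht₁)
  have hfix : ∀ h : H, ∀ y ∈ ({u, v} : Set (Fin n)), (h : Equiv.Perm (Fin n)) y = y :=
    fun h => (mem_fixingSubgroup_iff _).1 h.2
  have ha₀ : t₀ a = u := by
    simp only [t₀, Pi.smul_apply, ha₁]
    exact hfix h₀⁻¹ u (by simp)
  have hb₀ : t₀ b = v := by
    simp only [t₀, Pi.smul_apply, hb₁]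
    exact hfix h₀⁻¹ v (by simp)
  have hgood : ¬ KBad x k u v := fun hbad => huseful ⟨k, by omega, hkm, hbad⟩
  -- Every relabelling that produces a bad pair moves `t₀` onto a non-reconstructible tuple.
  have hmono : Nat.card {h : H // CloseUsefulUndeducible x (revealedSet (relabel h ω)) u v} ≤
      Nat.card {h : H // h • t₀ ∈
        {t | Injective t ∧ ContainsBoth u v t ∧ ¬ CycleReconstructible x t}} := by
    refine Nat.card_le_card_of_injective (Subtype.impEmbedding _ _ fun h ⟨_, _, hded⟩ => ?_)
      (Subtype.impEmbedding _ _ _).injective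
    have hcyc : IsCyclicTuple (revealedSet (relabel h ω)) (h • t₀) := by
      simpa [Subgroup.smul_def] using (isCyclicTuple_relabel_iff h ω t₀).2 ht₀
    have ha : (h • t₀) a = u := by simp [Subgroup.smul_def, ha₀, hfix h u (by simp)]
    have hb : (h • t₀) b = v := by simp [Subgroup.smul_def, hb₀, hfix h v (by simp)]
    exact ⟨hcyc.1, ⟨⟨a, ha⟩, ⟨b, hb⟩⟩, fun hrec => hded (hcyc.deducible hrec ha hb)⟩
  calc (Nat.card {h : H // CloseUsefulUndeducible x (revealedSet (relabel h ω)) u v} : ℝ)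
      ≤ (n : ℝ) ^ (-(0.005 : ℝ)) * k ^ 2 * Nat.card H :=
        (Nat.cast_le.2 hmono).trans
          (card_smul_mem_not_cycleReconstructible_le huv ht₀.1 ha₀ hb₀ hgood)
    _ ≤ (n : ℝ) ^ (-(0.005 : ℝ)) * (0.9 * Real.log n) ^ 2 * Nat.card H := by gcongr

instance {n : ℕ} {p : ℝ} : IsProbabilityMeasure (gnpMeasure n p) := by
  unfold gnpMeasure
  infer_instance

theorem gnpMeasure_closeUsefulUndeducible_le {n : ℕ} (p : ℝ) (x : Fin n → ℝ) {u v : Fin n}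
    (huv : u ≠ v) :
    gnpMeasure n p {ω | CloseUsefulUndeducible x (revealedSet ω) u v} ≤
      ENNReal.ofReal ((n : ℝ) ^ (-(0.005 : ℝ)) * (0.9 * Real.log n) ^ 2) := by
  refine measure_le_of_forall_card_le (ι := fixingSubgroup (Equiv.Perm (Fin n)) {u, v})
    (f := fun h => relabel h.1) (fun h => measurePreserving_relabel p h.1)
    MeasurableSet.of_discrete fun ω => ?_
  rw [← ENNReal.ofReal_natCast, ← ENNReal.ofReal_natCast,
    ← ENNReal.ofReal_mul (by positivity)]
  exact ENNReal.ofReal_le_ofReal (card_relabel_closeUsefulUndeducible_le x ω huv)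

theorem gnpMeasure_lt_ncard_le {n : ℕ} (p : ℝ) (x : Fin n → ℝ) {A : ℝ} (hA : 0 < A) :
    gnpMeasure n p {ω | A < ({e : Sym2 (Fin n) | ∃ u v : Fin n, e = s(u, v) ∧ u ≠ v ∧
        CloseUsefulUndeducible x (revealedSet ω) u v}.ncard : ℝ)} ≤
      ENNReal.ofReal ((n : ℝ) ^ 2 * ((n : ℝ) ^ (-(0.005 : ℝ)) * (0.9 * Real.log n) ^ 2) / A) := by
  set β := (n : ℝ) ^ (-(0.005 : ℝ)) * (0.9 * Real.log n) ^ 2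
  set E : Fin n × Fin n → Set (Outcome n) :=
    fun z => {ω | z.1 ≠ z.2 ∧ CloseUsefulUndeducible x (revealedSet ω) z.1 z.2}
  have hcount : ∀ ω, {e : Sym2 (Fin n) | ∃ u v : Fin n, e = s(u, v) ∧ u ≠ v ∧
      CloseUsefulUndeducible x (revealedSet ω) u v}.ncard ≤ {z | ω ∈ E z}.ncard := by
    intro ω
    have himage : {e : Sym2 (Fin n) | ∃ u v : Fin n, e = s(u, v) ∧ u ≠ v ∧
        CloseUsefulUndeducible x (revealedSet ω) u v} =
          (fun z : Fin n × Fin n => s(z.1, z.2)) '' {z | ω ∈ E z} := by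
      ext e
      constructor
      · rintro ⟨u, v, rfl, h⟩
        exact ⟨(u, v), h, rfl⟩
      · rintro ⟨⟨u, v⟩, h, rfl⟩
        exact ⟨u, v, rfl, h⟩
    rw [himage]
    exact Set.ncard_image_le (Set.toFinite _)
  have hE : ∀ z, gnpMeasure n p (E z) ≤ ENNReal.ofReal β := by
    rintro ⟨u, v⟩
    rcases eq_or_ne u v with rfl | huv
    · simp [E]
    · exact (measure_mono fun ω hω => hω.2).trans (gnpMeasure_closeUsefulUndeducible_le p x huv)
  have hsum : ∑ z, gnpMeasure n p (E z) ≤ ENNReal.ofReal ((n : ℝ) ^ 2 * β) := by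
    calc ∑ z, gnpMeasure n p (E z) ≤ ∑ _z : Fin n × Fin n, ENNReal.ofReal β :=
          Finset.sum_le_sum fun z _ => hE z
      _ = ENNReal.ofReal ((n : ℝ) ^ 2 * β) := by
          rw [Finset.sum_const, Finset.card_univ, Fintype.card_prod, Fintype.card_fin,
            nsmul_eq_mul, ENNReal.ofReal_mul (p := (n : ℝ) ^ 2) (by positivity), ← sq]
          norm_cast
  have hmarkov := mul_meas_ge_ncard_le_sum (gnpMeasure n p)
    (fun _ => MeasurableSet.of_discrete) (E := E) (ENNReal.ofReal A)
  rw [ENNReal.ofReal_div_of_pos hA, ENNReal.le_div_iff_mul_le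
    (Or.inl (ENNReal.ofReal_pos.2 hA).ne') (Or.inl ENNReal.ofReal_ne_top), mul_comm]
  refine le_trans ?_ (hmarkov.trans hsum)
  gcongr with ω
  intro hω
  exact (ENNReal.ofReal_le_ofReal hω.le).trans
    (by rw [ENNReal.ofReal_natCast]; exact_mod_cast hcount ω)

theorem tendsto_rpow_log_sq_div_rpow :
    Filter.Tendsto (fun n : ℕ => (n : ℝ) ^ 2 * ((n : ℝ) ^ (-(0.005 : ℝ)) *
        (0.9 * Real.log n) ^ 2) / (n : ℝ) ^ ((2 : ℝ) - 0.002)) Filter.atTop (nhds 0) := by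
  have hlim : Filter.Tendsto (fun n : ℕ => 0.81 * (Real.log n ^ 2 / (n : ℝ) ^ (0.003 : ℝ)))
      Filter.atTop (nhds 0) := by
    have := ((isLittleO_log_rpow_rpow_atTop 2 (by norm_num : (0 : ℝ) < 0.003)
      ).tendsto_div_nhds_zero.const_mul 0.81).comp tendsto_natCast_atTop_atTop
    simpa [Function.comp_def] using this
  refine hlim.congr' ?_
  filter_upwards [Filter.eventually_gt_atTop 0] with n hn
  have hn : (0 : ℝ) < n := by exact_mod_cast hn
  have hsplit : (n : ℝ) ^ ((2 : ℝ) - 0.002) =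
      (n : ℝ) ^ 2 * (n : ℝ) ^ (-(0.005 : ℝ)) * (n : ℝ) ^ (0.003 : ℝ) := by
    rw [← Real.rpow_two, ← Real.rpow_add hn, ← Real.rpow_add hn]
    norm_num
  rw [hsplit]
  field_simp
  ring

theorem statement11_general
    (x : (n : ℕ) → Fin n → ℝ)
    (p : ℕ → ℝ) :
    Filter.Tendsto
      (fun (n : ℕ) => gnpMeasure n (p n)
        {ω | (({e : Sym2 (Fin n) | ∃ u v : Fin n, e = s(u, v) ∧ u ≠ v ∧
            OnShortCycle (SimpleGraph.fromEdgeSet (revealedSet ω)) (0.9 * Real.log n) u v ∧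
            ¬ Useless (x n) u v ∧
            ¬ Deducible (x n) (revealedSet ω) u v}).ncard : ℝ)
          ≤ (n : ℝ) ^ ((2 : ℝ) - 0.002)})
      Filter.atTop (nhds 1) := by
  set N : (n : ℕ) → Outcome n → ℝ := fun n ω =>
    ({e : Sym2 (Fin n) | ∃ u v : Fin n, e = s(u, v) ∧ u ≠ v ∧
      CloseUsefulUndeducible (x n) (revealedSet ω) u v}.ncard : ℝ)
  have hfail : Filter.Tendsto (fun n => gnpMeasure n (p n)
      {ω | (n : ℝ) ^ ((2 : ℝ) - 0.002) < N n ω}) Filter.atTop (nhds 0) := by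
    refine tendsto_of_tendsto_of_tendsto_of_le_of_le' tendsto_const_nhds
      (by simpa using ENNReal.tendsto_ofReal tendsto_rpow_log_sq_div_rpow)
      (Filter.Eventually.of_forall fun _ => zero_le) ?_
    filter_upwards [Filter.eventually_gt_atTop 0] with n hn
    exact gnpMeasure_lt_ncard_le (p n) (x n) (Real.rpow_pos_of_pos (by exact_mod_cast hn) _)
  have hcompl : ∀ n, gnpMeasure n (p n) {ω | N n ω ≤ (n : ℝ) ^ ((2 : ℝ) - 0.002)} =
      1 - gnpMeasure n (p n) {ω | (n : ℝ) ^ ((2 : ℝ) - 0.002) < N n ω} := fun n => by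
    rw [← prob_compl_eq_one_sub MeasurableSet.of_discrete]
    congr 1
    ext ω
    simp
  show Filter.Tendsto (fun n => gnpMeasure n (p n) {ω | N n ω ≤ (n : ℝ) ^ ((2 : ℝ) - 0.002)})
    Filter.atTop (nhds 1)
  simp_rw [hcompl]
  simpa using ENNReal.Tendsto.sub tendsto_const_nhds hfail (Or.inl ENNReal.one_ne_top)

/-- Whp at most `n ^ (2 - 0.002)` unordered pairs of distinct indices are close and useful
but not deducible. -/
theorem statement11
    (x : (n : ℕ) → Fin n → ℝ) (hx : ∀ n, Function.Injective (x n))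
    (p : ℕ → ℝ) (hp : ∀ n, p n ∈ Set.Icc (0 : ℝ) 1) :
    Filter.Tendsto
      (fun (n : ℕ) => gnpMeasure n (p n)
        {ω | (({e : Sym2 (Fin n) | ∃ u v : Fin n, e = s(u, v) ∧ u ≠ v ∧
            OnShortCycle (SimpleGraph.fromEdgeSet (revealedSet ω)) (0.9 * Real.log n) u v ∧
            ¬ Useless (x n) u v ∧
            ¬ Deducible (x n) (revealedSet ω) u v}).ncard : ℝ)
          ≤ (n : ℝ) ^ ((2 : ℝ) - 0.002)})
      Filter.atTop (nhds 1) :=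
  statement11_general x p
end

section
/- For every sequence of injective maps x_n : Fin n → ℝ, in the coupled random graphs the probability that there exist a p ∈ [(0.9·log n)/n, (2·log n)/n] and an ordered pair of indices that is uncertain in G_p tends to 0 as n → ∞. (log denotes the natural logarithm.) -/
/-- The product of uniform-`[0,1]` measures indexed by the unordered pairs of distinct indices
of `Fin n`: the standard coupling of the random graphs `G_p`. -/
noncomputable def coupledMeasure (n : ℕ) :
    MeasureTheory.Measure ({e : Sym2 (Fin n) // ¬ e.IsDiag} → ℝ) :=
  MeasureTheory.Measure.pi fun _ => MeasureTheory.volume.restrict (Set.Icc (0 : ℝ) 1)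

/-- `GpSet ω p` is the set of pairs `e` with `U_e ≤ p`, i.e. the coupled random graph `G_p`. -/
def GpSet {n : ℕ} (ω : {e : Sym2 (Fin n) // ¬ e.IsDiag} → ℝ) (p : ℝ) : Set (Sym2 (Fin n)) :=
  {e | ∃ h : ¬ e.IsDiag, ω ⟨e, h⟩ ≤ p}

/-- An ordered pair `(u, v)` is uncertain in `G` if `{u, v}` is the only edge of `G` containing
`u` and the reflection of `x u` over `x v` is a point `x ℓ` with `ℓ` lying in exactly one
edge of `G`. -/
def Uncertain {n : ℕ} (x : Fin n → ℝ) (G : Set (Sym2 (Fin n))) (u v : Fin n) : Prop :=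
  u ≠ v ∧ s(u, v) ∈ G ∧ (∀ e ∈ G, u ∈ e → e = s(u, v)) ∧
    ∃ ℓ : Fin n, x ℓ = 2 * x v - x u ∧ {e ∈ G | ℓ ∈ e}.ncard = 1

/-!
If `(u, v)` is uncertain in `G_p` with `a ≤ p ≤ b`, let `ℓ` be the index with
`x ℓ = 2 x v - x u` (unique, and distinct from `u` and `v`, by injectivity) and `ℓw` the only
edge of `G_p` at `ℓ`. Then `U_uv ≤ b` and `U_ℓw ≤ b`, while each of the other `2n - 5` pairs at
`u` or `ℓ` has `U_e > a`. By independence this has probability at most `b² (1 - a)^(2n - 5)`,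
and there are at most `n³` choices of `(u, v, w)`. For `a = 0.9 log n / n`, `b = 2 log n / n`
the union bound is `O(n³ (log n / n)² n^(-1.8)) = O(log² n · n^(-0.8)) → 0`.
-/
open MeasureTheory Finset Real
open scoped ENNReal

section IncidentEdges

variable {α : Type*} [Fintype α] [DecidableEq α]

def incidentEdges (u : α) : Finset {e : Sym2 α // ¬ e.IsDiag} := {e | u ∈ (e : Sym2 α)}

theorem card_incidentEdges (u : α) : #(incidentEdges u) = Fintype.card α - 1 := by
  rw [← card_univ, ← card_erase_of_mem (mem_univ u)]
  symm
  refine card_bij (fun t ht => ⟨s(u, t), by simpa using (ne_of_mem_erase ht).symm⟩)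
    (fun t _ => by simp [incidentEdges])
    (fun t _ t' _ h => Sym2.congr_right.mp (congrArg Subtype.val h)) ?_
  rintro ⟨e, he⟩ hu
  rw [incidentEdges, mem_filter] at hu
  exact ⟨Sym2.Mem.other hu.2, by simpa using Sym2.other_ne he hu.2,
    Subtype.ext (Sym2.other_spec hu.2)⟩

theorem incidentEdges_inter {u ℓ : α} (h : u ≠ ℓ) :
    incidentEdges u ∩ incidentEdges ℓ = {⟨s(u, ℓ), by simpa⟩} := by
  ext e
  simp [incidentEdges, ← Sym2.mem_and_mem_iff h, Subtype.ext_iff]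

theorem card_incidentEdges_union {u ℓ : α} (h : u ≠ ℓ) :
    #(incidentEdges u ∪ incidentEdges ℓ) = 2 * Fintype.card α - 3 := by
  have hcard := card_union_add_card_inter (incidentEdges u) (incidentEdges ℓ)
  have h2 : 1 < Fintype.card α := Fintype.one_lt_card_iff.mpr ⟨u, ℓ, h⟩
  rw [incidentEdges_inter h, card_incidentEdges, card_incidentEdges, card_singleton] at hcard
  omega

end IncidentEdges

instance : IsProbabilityMeasure (volume.restrict (Set.Icc (0 : ℝ) 1)) := ⟨by simp⟩

theorem uniform_Iic_le (b : ℝ) :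
    volume.restrict (Set.Icc (0 : ℝ) 1) (Set.Iic b) ≤ ENNReal.ofReal b := by
  rw [Measure.restrict_apply measurableSet_Iic]
  calc volume (Set.Iic b ∩ Set.Icc 0 1) ≤ volume (Set.Icc 0 b) :=
        measure_mono fun y ⟨hyb, hy0, _⟩ => ⟨hy0, hyb⟩
    _ = ENNReal.ofReal b := by simp

theorem uniform_Ioi_le (a : ℝ) :
    volume.restrict (Set.Icc (0 : ℝ) 1) (Set.Ioi a) ≤ ENNReal.ofReal (1 - a) := by
  rw [Measure.restrict_apply measurableSet_Ioi]
  calc volume (Set.Ioi a ∩ Set.Icc 0 1) ≤ volume (Set.Ioc a 1) :=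
        measure_mono fun y ⟨hya, _, hy1⟩ => ⟨hya, hy1⟩
    _ = ENNReal.ofReal (1 - a) := by simp

theorem pi_uniform_le {ι : Type*} [Fintype ι] [DecidableEq ι] {i j : ι} (hij : i ≠ j)
    {F : Finset ι} (hi : i ∉ F) (hj : j ∉ F) (a b : ℝ) :
    Measure.pi (fun _ : ι => volume.restrict (Set.Icc (0 : ℝ) 1))
        {ω | ω i ≤ b ∧ ω j ≤ b ∧ ∀ k ∈ F, a < ω k} ≤
      ENNReal.ofReal b ^ 2 * ENNReal.ofReal (1 - a) ^ #F := by
  set ν := volume.restrict (Set.Icc (0 : ℝ) 1)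
  set t : ι → Set ℝ := fun k => if k ∈ F then Set.Ioi a else Set.Iic b
  have hbox : {ω : ι → ℝ | ω i ≤ b ∧ ω j ≤ b ∧ ∀ k ∈ F, a < ω k} ⊆
      (↑(insert i (insert j F)) : Set ι).pi t := by
    rintro ω ⟨hωi, hωj, hωF⟩ k hk
    simp only [coe_insert, Set.mem_insert_iff, mem_coe] at hk
    rcases hk with rfl | rfl | hk <;> simp [t, *]
  calc Measure.pi (fun _ => ν) {ω | ω i ≤ b ∧ ω j ≤ b ∧ ∀ k ∈ F, a < ω k}
      ≤ ν (t i) * (ν (t j) * ∏ k ∈ F, ν (t k)) := by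
        grw [hbox, Measure.pi_pi_finset, prod_insert (by simp [hij, hi]), prod_insert hj]
    _ ≤ ENNReal.ofReal b * (ENNReal.ofReal b * ∏ _k ∈ F, ENNReal.ofReal (1 - a)) := by
        gcongr with k hk
        · simp only [t, if_neg hi]; exact uniform_Iic_le b
        · simp only [t, if_neg hj]; exact uniform_Iic_le b
        · simp only [t, if_pos hk]; exact uniform_Ioi_le a
    _ = ENNReal.ofReal b ^ 2 * ENNReal.ofReal (1 - a) ^ #F := by
        rw [prod_const]; ring

theorem monotone_GpSet {n : ℕ} (ω : {e : Sym2 (Fin n) // ¬ e.IsDiag} → ℝ) :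
    Monotone (GpSet ω) :=
  fun _ _ hpq _ ⟨he, hωe⟩ => ⟨he, hωe.trans hpq⟩

section LeafPair

variable {n : ℕ}

/-- Unlike uncertainty itself, this is a box in the edge variables, so its probability
factorises. -/
def leafPairEvent (a b : ℝ) (u v ℓ w : Fin n) : Set ({e : Sym2 (Fin n) // ¬ e.IsDiag} → ℝ) :=
  {ω | s(u, v) ∈ GpSet ω b ∧ s(ℓ, w) ∈ GpSet ω b ∧
    ∀ e ∈ GpSet ω a, u ∈ e ∨ ℓ ∈ e → e = s(u, v) ∨ e = s(ℓ, w)}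

theorem exists_leafPairEvent_of_uncertain {x : Fin n → ℝ}
    {ω : {e : Sym2 (Fin n) // ¬ e.IsDiag} → ℝ} {a b p : ℝ} (hp : p ∈ Set.Icc a b) {u v : Fin n}
    (h : Uncertain x (GpSet ω p) u v) :
    ∃ ℓ w, x ℓ = 2 * x v - x u ∧ ω ∈ leafPairEvent a b u v ℓ w := by
  obtain ⟨-, huv, hu, ℓ, hℓ, hcard⟩ := h
  obtain ⟨e₀, he₀⟩ := Set.ncard_eq_one.mp hcard
  have hℓe₀ : e₀ ∈ GpSet ω p ∧ ℓ ∈ e₀ := (Set.ext_iff.mp he₀ e₀).mpr rfl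
  set w := Sym2.Mem.other hℓe₀.2
  have he₀w : s(ℓ, w) = e₀ := Sym2.other_spec hℓe₀.2
  refine ⟨ℓ, w, hℓ, monotone_GpSet ω hp.2 huv, monotone_GpSet ω hp.2 (he₀w ▸ hℓe₀.1), ?_⟩
  rintro e he (hue | hℓe)
  · exact .inl (hu e (monotone_GpSet ω hp.1 he) hue)
  · have : e ∈ {e ∈ GpSet ω p | ℓ ∈ e} := ⟨monotone_GpSet ω hp.1 he, hℓe⟩
    rw [he₀, Set.mem_singleton_iff] at this
    exact .inr (this.trans he₀w.symm)

theorem coupledMeasure_leafPairEvent_le (a b : ℝ) {u v ℓ w : Fin n} (huv : u ≠ v)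
    (hℓu : ℓ ≠ u) (hℓv : ℓ ≠ v) :
    coupledMeasure n (leafPairEvent a b u v ℓ w) ≤
      ENNReal.ofReal b ^ 2 * ENNReal.ofReal (1 - a) ^ (2 * n - 5) := by
  rcases eq_or_ne ℓ w with rfl | hℓw
  · simp [leafPairEvent, GpSet]
  set e₁ : {e : Sym2 (Fin n) // ¬ e.IsDiag} := ⟨s(u, v), by simpa⟩
  set e₂ : {e : Sym2 (Fin n) // ¬ e.IsDiag} := ⟨s(ℓ, w), by simpa⟩
  set F := (incidentEdges u ∪ incidentEdges ℓ) \ {e₁, e₂}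
  have he₁₂ : e₁ ≠ e₂ := by
    simp [e₁, e₂, Subtype.ext_iff, hℓu.symm, hℓv.symm]
  have hF : #F = 2 * n - 5 := by
    have hsub : {e₁, e₂} ⊆ incidentEdges u ∪ incidentEdges ℓ := by
      simp [insert_subset_iff, incidentEdges, e₁, e₂]
    rw [card_sdiff_of_subset hsub, card_incidentEdges_union hℓu.symm, card_pair he₁₂,
      Fintype.card_fin]
    omega
  have hevent :
      leafPairEvent a b u v ℓ w ⊆ {ω | ω e₁ ≤ b ∧ ω e₂ ≤ b ∧ ∀ k ∈ F, a < ω k} := by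
    rintro ω ⟨⟨_, hω₁⟩, ⟨_, hω₂⟩, hG⟩
    refine ⟨hω₁, hω₂, fun k hk => not_le.mp fun hωk => ?_⟩
    simp only [F, mem_sdiff, mem_union, incidentEdges, mem_filter, mem_univ, true_and,
      mem_insert, mem_singleton] at hk
    rcases hG k ⟨k.2, hωk⟩ hk.1 with h | h
    · exact hk.2 (.inl (Subtype.ext h))
    · exact hk.2 (.inr (Subtype.ext h))
  rw [← hF]
  exact (measure_mono hevent).trans (pi_uniform_le he₁₂ (by simp [F]) (by simp [F]) a b)

end LeafPair

theorem coupledMeasure_uncertain_le {n : ℕ} {x : Fin n → ℝ} (hx : Function.Injective x)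
    (a b : ℝ) :
    coupledMeasure n {ω | ∃ p ∈ Set.Icc a b, ∃ u v, Uncertain x (GpSet ω p) u v} ≤
      n ^ 3 * (ENNReal.ofReal b ^ 2 * ENNReal.ofReal (1 - a) ^ (2 * n - 5)) := by
  classical
  set C := ENNReal.ofReal b ^ 2 * ENNReal.ofReal (1 - a) ^ (2 * n - 5)
  set reflections : Fin n → Fin n → Finset (Fin n) :=
    fun u v => {ℓ | u ≠ v ∧ x ℓ = 2 * x v - x u}
  have hcover : {ω | ∃ p ∈ Set.Icc a b, ∃ u v, Uncertain x (GpSet ω p) u v} ⊆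
      ⋃ u, ⋃ v, ⋃ w, ⋃ ℓ ∈ reflections u v, leafPairEvent a b u v ℓ w := by
    rintro ω ⟨p, hp, u, v, h⟩
    obtain ⟨ℓ, w, hℓ, hω⟩ := exists_leafPairEvent_of_uncertain hp h
    simp only [Set.mem_iUnion]
    exact ⟨u, v, w, ℓ, by simp [reflections, h.1, hℓ], hω⟩
  have hterm : ∀ u v w,
      ∑ ℓ ∈ reflections u v, coupledMeasure n (leafPairEvent a b u v ℓ w) ≤ C := by
    intro u v w
    have hcard : #(reflections u v) ≤ 1 :=
      card_le_one.mpr fun ℓ hℓ ℓ' hℓ' => hx (by simp_all [reflections])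
    refine (sum_le_card_nsmul _ _ C fun ℓ hℓ => ?_).trans
      ((nsmul_le_nsmul_left zero_le hcard).trans_eq (one_nsmul C))
    obtain ⟨huv, hℓ⟩ : u ≠ v ∧ x ℓ = 2 * x v - x u := by simpa [reflections] using hℓ
    refine coupledMeasure_leafPairEvent_le a b huv (fun h => huv ?_) (fun h => huv ?_) <;>
      subst h <;> exact hx (by linarith)
  calc coupledMeasure n {ω | ∃ p ∈ Set.Icc a b, ∃ u v, Uncertain x (GpSet ω p) u v}
      ≤ ∑ u, ∑ v, ∑ w, ∑ ℓ ∈ reflections u v,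
          coupledMeasure n (leafPairEvent a b u v ℓ w) := by
        refine (measure_mono hcover).trans <| (measure_iUnion_fintype_le _ _).trans <|
          sum_le_sum fun u _ => (measure_iUnion_fintype_le _ _).trans <|
          sum_le_sum fun v _ => (measure_iUnion_fintype_le _ _).trans <|
          sum_le_sum fun w _ => measure_biUnion_finset_le _ _
    _ ≤ ∑ _u : Fin n, ∑ _v : Fin n, ∑ _w : Fin n, C := by
        gcongr with u _ v _ w _
        exact hterm u v w
    _ = n ^ 3 * C := by
        simp only [sum_const, card_univ, Fintype.card_fin, nsmul_eq_mul]
        ring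

theorem natCast_pow_three_mul_le_ofReal {b : ℝ} (hb : 0 ≤ b) (a : ℝ) (m k : ℕ) :
    (m : ℝ≥0∞) ^ 3 * (ENNReal.ofReal b ^ 2 * ENNReal.ofReal (1 - a) ^ k) ≤
      ENNReal.ofReal (m ^ 3 * b ^ 2 * exp (-a) ^ k) := by
  have h1a : ENNReal.ofReal (1 - a) ≤ ENNReal.ofReal (exp (-a)) :=
    ENNReal.ofReal_le_ofReal (by linarith [add_one_le_exp (-a)])
  grw [h1a]
  rw [ENNReal.ofReal_mul (by positivity), ENNReal.ofReal_mul (by positivity),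
    ENNReal.ofReal_pow (by positivity), ENNReal.ofReal_pow hb, ENNReal.ofReal_pow (exp_nonneg _),
    ENNReal.ofReal_natCast, mul_assoc]

theorem pow_three_mul_exp_le {n : ℕ} (hn : 3 ≤ n) :
    (n : ℝ) ^ 3 * (2 * log n / n) ^ 2 * exp (-(0.9 * log n / n)) ^ (2 * n - 5) ≤
      4 * exp 4.5 * (log n ^ 2 * exp (-0.8 * log n)) := by
  have hn0 : (0 : ℝ) < n := by positivity
  set t := log n
  have hexp : exp t = n := exp_log hn0
  have htn : t / n ≤ 1 := (div_le_one hn0).mpr ((log_le_sub_one_of_pos hn0).trans (by linarith))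
  have hk : ((2 * n - 5 : ℕ) : ℝ) = 2 * n - 5 := by
    rw [Nat.cast_sub (by omega)]; push_cast; ring
  have hexponent : t + (2 * n - 5) * -(0.9 * t / n) = -0.8 * t + 4.5 * (t / n) := by
    field_simp; ring
  rw [← exp_nat_mul, hk]
  calc (n : ℝ) ^ 3 * (2 * t / n) ^ 2 * exp ((2 * n - 5) * -(0.9 * t / n))
      = 4 * t ^ 2 * exp (t + (2 * n - 5) * -(0.9 * t / n)) := by
        rw [exp_add, hexp]; field_simp; ring
    _ ≤ 4 * t ^ 2 * exp (-0.8 * t + 4.5) := by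
        rw [hexponent]; gcongr; linarith
    _ = 4 * exp 4.5 * (t ^ 2 * exp (-0.8 * t)) := by
        rw [exp_add]; ring

/-- Whp there is no `p ∈ [(0.9 log n)/n, (2 log n)/n]` for which `G_p` contains an uncertain
ordered pair of indices. -/
theorem statement12
    (x : (n : ℕ) → Fin n → ℝ) (hx : ∀ n, Function.Injective (x n)) :
    Filter.Tendsto
      (fun (n : ℕ) => coupledMeasure n
        {ω | ∃ p ∈ Set.Icc (0.9 * Real.log n / n) (2 * Real.log n / n),
          ∃ u v : Fin n, Uncertain (x n) (GpSet ω p) u v})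
      Filter.atTop (nhds 0) := by
  set bound : ℕ → ℝ := fun n => 4 * exp 4.5 * (log n ^ 2 * exp (-0.8 * log n))
  have hbound : Filter.Tendsto (fun n => ENNReal.ofReal (bound n)) Filter.atTop (nhds 0) := by
    have hdecay := (tendsto_rpow_mul_exp_neg_mul_atTop_nhds_zero 2 0.8 (by norm_num)).comp
      (tendsto_log_atTop.comp tendsto_natCast_atTop_atTop)
    simpa [bound, Function.comp_def, rpow_two] using
      ENNReal.tendsto_ofReal (hdecay.const_mul (4 * exp 4.5))
  refine tendsto_of_tendsto_of_tendsto_of_le_of_le' tendsto_const_nhds hbound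
    (.of_forall fun _ => zero_le) ?_
  filter_upwards [Filter.eventually_ge_atTop 3] with n hn
  calc _ ≤ _ := coupledMeasure_uncertain_le (hx n) _ _
    _ ≤ _ := natCast_pow_three_mul_le_ofReal (by positivity) _ _ _
    _ ≤ ENNReal.ofReal (bound n) := ENNReal.ofReal_le_ofReal (pow_three_mul_exp_le hn)
end

section
/- Let x : Fin n → ℝ be injective, let P be a set of unordered pairs of distinct indices of Fin n, and let U ⊆ Fin n be reconstructible. If i ∈ Fin n and there exist distinct indices j₁, j₂ ∈ U with {i, j₁} ∈ P and {i, j₂} ∈ P, then U ∪ {i} is reconstructible. -/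
def Reconstructible {n : ℕ} (x : Fin n → ℝ) (P : Set (Sym2 (Fin n))) (U : Set (Fin n)) : Prop :=
  ∀ w : Fin n → ℝ, Function.Injective w →
    (∀ i j : Fin n, s(i, j) ∈ P → |w i - w j| = |x i - x j|) →
    ∀ i ∈ U, ∀ j ∈ U, |w i - w j| = |x i - x j|

lemma key_aux (a b c a' b' c' ε : ℝ) (hε : ε = 1 ∨ ε = -1)
    (hab : a' - b' = ε * (a - b)) (hca : |c' - a'| = |c - a|)
    (hcb : |c' - b'| = |c - b|) (hne : a ≠ b) : c' - a' = ε * (c - a) := by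
  rcases abs_eq_abs.mp hca with h1 | h1 <;> rcases abs_eq_abs.mp hcb with h2 | h2 <;>
    rcases hε with rfl | rfl <;> ring_nf at * <;>
      first
        | linarith
        | exact absurd (by linarith : a = b) hne

/-- If `U` is reconstructible and `i` has two revealed distances to distinct members of `U`,
then `U ∪ {i}` is reconstructible. -/
theorem statement14 {n : ℕ} (x : Fin n → ℝ) (hx : Function.Injective x)
    (P : Set (Sym2 (Fin n))) (U : Set (Fin n)) (hU : Reconstructible x P U)
    (i j₁ j₂ : Fin n) (hj : j₁ ≠ j₂) (hj₁ : j₁ ∈ U) (hj₂ : j₂ ∈ U)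
    (he₁ : s(i, j₁) ∈ P) (he₂ : s(i, j₂) ∈ P) :
    Reconstructible x P (U ∪ {i}) := by
  have hxne : x j₁ ≠ x j₂ := fun h => hj (hx h)
  intro w hw hP
  have hUw : ∀ u ∈ U, ∀ v ∈ U, |w u - w v| = |x u - x v| := hU w hw hP
  have h12 : |w j₁ - w j₂| = |x j₁ - x j₂| := hUw j₁ hj₁ j₂ hj₂
  obtain ⟨ε, hε, hab⟩ : ∃ ε : ℝ, (ε = 1 ∨ ε = -1) ∧ w j₁ - w j₂ = ε * (x j₁ - x j₂) := by
    rcases abs_eq_abs.mp h12 with h | h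
    · exact ⟨1, Or.inl rfl, by linarith⟩
    · exact ⟨-1, Or.inr rfl, by linarith⟩
  have hall : ∀ u ∈ U ∪ {i}, w u - w j₁ = ε * (x u - x j₁) := by
    rintro u (hu | rfl)
    · exact key_aux (x j₁) (x j₂) (x u) (w j₁) (w j₂) (w u) ε hε hab
        (hUw u hu j₁ hj₁) (hUw u hu j₂ hj₂) hxne
    · exact key_aux (x j₁) (x j₂) (x u) (w j₁) (w j₂) (w u) ε hε hab
        (hP u j₁ he₁) (hP u j₂ he₂) hxne
  intro u hu v hv
  have h1 := hall u hu
  have h2 := hall v hv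
  have h3 : w u - w v = ε * (x u - x v) := by
    have : ε * (x u - x j₁) - ε * (x v - x j₁) = ε * (x u - x v) := by ring
    linarith
  rw [h3, abs_mul]
  rcases hε with rfl | rfl <;> simp
end

section
/- Let x : Fin n → ℝ be injective, let P be a set of unordered pairs of distinct indices of Fin n, and let U ⊆ Fin n be reconstructible. If i ∉ U, there is an index j ∈ U with {i, j} ∈ P, and there is an index ℓ ∈ U with x ℓ = 2·(x j) − (x i), then U ∪ {i} is reconstructible. -/
lemma key_abs (a b e d : ℝ) (h1 : |a| = |b|) (h2 : |e| = |d|) (h3 : |a + e| = |b + d|) :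
    |a - e| = |b - d| := by
  rw [← sq_eq_sq_iff_abs_eq_abs] at h1 h2 h3 ⊢
  linear_combination 2 * h1 + 2 * h2 - h3

/-- If `U` is reconstructible, `i ∉ U` has a revealed distance to some `j ∈ U`, and the
reflection of `x i` over `x j` is occupied by a point of `U`, then `U ∪ {i}` is
reconstructible. -/
theorem statement15 {n : ℕ} (x : Fin n → ℝ) (hx : Function.Injective x)
    (P : Set (Sym2 (Fin n))) (U : Set (Fin n)) (hU : Reconstructible x P U)
    (i j ℓ : Fin n) (hi : i ∉ U) (hjU : j ∈ U) (he : s(i, j) ∈ P)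
    (hℓU : ℓ ∈ U) (hℓ : x ℓ = 2 * x j - x i) :
    Reconstructible x P (U ∪ {i}) := by
  intro w hw hP u hu v hv
  have hiℓ : i ≠ ℓ := fun h => hi (h ▸ hℓU)
  have hd : |w i - w j| = |x i - x j| := hP i j he
  have hℓj : |w ℓ - w j| = |x ℓ - x j| := hU w hw hP ℓ hℓU j hjU
  have hwℓ : w ℓ - w j = -(w i - w j) := by
    have habs : |w ℓ - w j| = |w i - w j| := by
      rw [hℓj, hd, hℓ]
      rw [show 2 * x j - x i - x j = -(x i - x j) by ring, abs_neg]
    rcases abs_eq_abs.mp habs with h | h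
    · exact absurd (hw (by linarith)) (Ne.symm hiℓ)
    · exact h
  have main : ∀ k ∈ U, |w i - w k| = |x i - x k| := by
    intro k hk
    have h1 : |w k - w j| = |x k - x j| := hU w hw hP k hk j hjU
    have h3 : |w k - w ℓ| = |x k - x ℓ| := hU w hw hP k hk ℓ hℓU
    have h3' : |(w k - w j) + (w i - w j)| = |(x k - x j) + (x i - x j)| := by
      rw [show (w k - w j) + (w i - w j) = w k - w ℓ by linarith,
        show (x k - x j) + (x i - x j) = x k - x ℓ by rw [hℓ]; ring]
      exact h3
    have := key_abs (w k - w j) (x k - x j) (w i - w j) (x i - x j) h1 hd h3'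
    rw [show (w k - w j) - (w i - w j) = w k - w i by ring,
      show (x k - x j) - (x i - x j) = x k - x i by ring] at this
    rw [abs_sub_comm, this, abs_sub_comm]
  rcases hu with hu | hu <;> rcases hv with hv | hv
  · exact hU w hw hP u hu v hv
  · rw [Set.mem_singleton_iff.mp hv, abs_sub_comm, main u hu, abs_sub_comm]
  · rw [Set.mem_singleton_iff.mp hu]; exact main v hv
  · rw [Set.mem_singleton_iff.mp hu, Set.mem_singleton_iff.mp hv]
    simp
end

section
/- For every injective map x : Fin n → ℝ, the number of secure ordered pairs, i.e., ordered pairs (u,v) of distinct indices of Fin n for which there exists an index ℓ with x ℓ = 2·(x v) − (x u), is at most n²/2. -/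
/-!
Fix `v`, and let `b` and `a` be the numbers of points strictly below and strictly above `x v`.
Reflection in `x v` is injective and exchanges the two sides, so among the `u` with `(u, v)`
secure at most `min b a` lie below `x v` and at most `min b a` above it. As `v` varies, `b` runs
through `0, …, n - 1` with `a = n - 1 - b`, hence there are at most
`2 ∑_{k < n} min k (n - 1 - k) ≤ n² / 2` secure pairs.
-/

open Finset Function

lemma Set.ncard_setOf_prod_eq_sum {α β : Type*} [Fintype α] [Fintype β] (r : α → β → Prop)
    [DecidableRel r] : {p : α × β | r p.1 p.2}.ncard = ∑ b, #{a | r a b} := by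
  rw [Set.ncard_eq_toFinset_card', Set.toFinset_ofPred, card_filter, Fintype.sum_prod_type_right]
  simp only [card_filter]

lemma four_mul_sum_range_min_le (n : ℕ) : 4 * ∑ k ∈ range n, min k (n - 1 - k) ≤ n ^ 2 := by
  induction n using Nat.twoStepInduction with
  | zero => simp
  | one => simp
  | more n ih _ =>
    have hstep : ∑ k ∈ range (n + 2), min k (n + 2 - 1 - k)
        = ∑ k ∈ range n, min k (n - 1 - k) + n := by
      rw [sum_range_succ', sum_range_succ]
      have hshift : ∀ k ∈ range n, min (k + 1) (n - k) = min k (n - 1 - k) + 1 := by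
        intro k hk
        have := mem_range.mp hk
        omega
      simp [sum_congr rfl hshift, sum_add_distrib]
    rw [hstep]
    nlinarith

lemma four_mul_sum_min_le_of_injective {ι : Type*} [Fintype ι] {n : ℕ} {r : ι → ℕ}
    (hr : Injective r) (hlt : ∀ i, r i < n) :
    4 * ∑ i, min (r i) (n - 1 - r i) ≤ n ^ 2 := by
  classical
  calc 4 * ∑ i, min (r i) (n - 1 - r i)
      = 4 * ∑ k ∈ univ.image r, min k (n - 1 - k) := by rw [sum_image hr.injOn]
    _ ≤ 4 * ∑ k ∈ range n, min k (n - 1 - k) := by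
        gcongr 4 * ?_
        exact sum_le_sum_of_subset (by simpa [subset_iff] using hlt)
    _ ≤ n ^ 2 := four_mul_sum_range_min_le n

lemma card_le_card_of_reflect {ι : Type*} {x : ι → ℝ} (hx : Injective x) {s t : Finset ι} (c : ℝ)
    (h : ∀ u ∈ s, ∃ ℓ ∈ t, x ℓ = 2 * c - x u) : #s ≤ #t :=
  card_le_card_of_forall_subsingleton (fun u ℓ => x ℓ = 2 * c - x u) h
    fun _ _ _ ⟨_, hu⟩ _ ⟨_, hu'⟩ => hx (by linarith)

def IsSecurePair {ι : Type*} (x : ι → ℝ) (u v : ι) : Prop :=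
  u ≠ v ∧ ∃ ℓ, x ℓ = 2 * x v - x u

namespace SecurePairs

variable {ι : Type*} [Fintype ι] {x : ι → ℝ}

noncomputable def below (x : ι → ℝ) (v : ι) : Finset ι := {w | x w < x v}

noncomputable def above (x : ι → ℝ) (v : ι) : Finset ι := {w | x v < x w}

@[simp] lemma mem_below {v w : ι} : w ∈ below x v ↔ x w < x v := by simp [below]

@[simp] lemma mem_above {v w : ι} : w ∈ above x v ↔ x v < x w := by simp [above]

lemma card_below_add_card_above [DecidableEq ι] (hx : Injective x) (v : ι) :
    #(below x v) + #(above x v) + 1 = Fintype.card ι := by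
  have hle : ({w | ¬ x w < x v} : Finset ι) = insert v (above x v) := by
    ext w
    simp only [mem_filter, mem_univ, true_and, not_lt, mem_insert, mem_above]
    rw [le_iff_eq_or_lt, hx.eq_iff, eq_comm]
  rw [add_assoc, ← card_insert_of_notMem (s := above x v) (a := v) (by simp), ← hle, below,
    card_filter_add_card_filter_not, card_univ]

lemma card_below_lt_card_below {v w : ι} (h : x v < x w) : #(below x v) < #(below x w) := by
  refine card_lt_card ((ssubset_iff_of_subset fun u hu => ?_).mpr ⟨v, by simpa, by simp⟩)
  simp only [mem_below] at hu ⊢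
  exact hu.trans h

lemma injective_card_below (hx : Injective x) : Injective fun v => #(below x v) := by
  intro v w h
  by_contra hne
  rcases (hx.ne hne).lt_or_gt with hlt | hlt
  · exact (card_below_lt_card_below hlt).ne h
  · exact (card_below_lt_card_below hlt).ne' h

open Classical in
lemma card_secure_le (hx : Injective x) (v : ι) :
    #{u | IsSecurePair x u v} ≤ 2 * min #(below x v) #(above x v) := by
  let lower : Finset ι := {u ∈ below x v | ∃ ℓ, x ℓ = 2 * x v - x u}
  let upper : Finset ι := {u ∈ above x v | ∃ ℓ, x ℓ = 2 * x v - x u}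
  have hsplit : ({u | IsSecurePair x u v} : Finset ι) ⊆ lower ∪ upper := by
    intro u hu
    obtain ⟨hne, hℓ⟩ := (mem_filter.mp hu).2
    rcases (hx.ne hne).lt_or_gt with hlt | hlt
    · exact mem_union_left _ (mem_filter.mpr ⟨mem_below.mpr hlt, hℓ⟩)
    · exact mem_union_right _ (mem_filter.mpr ⟨mem_above.mpr hlt, hℓ⟩)
  have hlower : #lower ≤ #(above x v) := card_le_card_of_reflect hx (x v) fun u hu => by
    obtain ⟨hlt, ℓ, hℓ⟩ := mem_filter.mp hu
    exact ⟨ℓ, mem_above.mpr (by linarith [mem_below.mp hlt]), hℓ⟩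
  have hupper : #upper ≤ #(below x v) := card_le_card_of_reflect hx (x v) fun u hu => by
    obtain ⟨hlt, ℓ, hℓ⟩ := mem_filter.mp hu
    exact ⟨ℓ, mem_below.mpr (by linarith [mem_above.mp hlt]), hℓ⟩
  have hlower' : #lower ≤ #(below x v) := card_le_card (filter_subset _ _)
  have hupper' : #upper ≤ #(above x v) := card_le_card (filter_subset _ _)
  calc #{u | IsSecurePair x u v} ≤ #(lower ∪ upper) := card_le_card hsplit
    _ ≤ #lower + #upper := card_union_le lower upper
    _ ≤ 2 * min #(below x v) #(above x v) := by omega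

theorem two_mul_ncard_isSecurePair_le (hx : Injective x) :
    2 * {p : ι × ι | IsSecurePair x p.1 p.2}.ncard ≤ Fintype.card ι ^ 2 := by
  classical
  have hrank (v : ι) : #(above x v) = Fintype.card ι - 1 - #(below x v) := by
    have := card_below_add_card_above hx v
    omega
  have hlt (v : ι) : #(below x v) < Fintype.card ι := by
    have := card_below_add_card_above hx v
    omega
  calc 2 * {p : ι × ι | IsSecurePair x p.1 p.2}.ncard
      = 2 * ∑ v, #{u | IsSecurePair x u v} := by rw [Set.ncard_setOf_prod_eq_sum]
    _ ≤ 2 * ∑ v, 2 * min #(below x v) (Fintype.card ι - 1 - #(below x v)) := by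
        gcongr with v
        exact (hrank v) ▸ card_secure_le hx v
    _ ≤ Fintype.card ι ^ 2 := by
        have := four_mul_sum_min_le_of_injective (injective_card_below hx) hlt
        rw [← mul_sum]
        omega

end SecurePairs

/-- The number of secure ordered pairs of distinct indices is at most `n² / 2`. -/
theorem statement16 {n : ℕ} (x : Fin n → ℝ) (hx : Function.Injective x) :
    (({p : Fin n × Fin n | p.1 ≠ p.2 ∧
        ∃ ℓ : Fin n, x ℓ = 2 * x p.2 - x p.1}).ncard : ℝ) ≤ (n : ℝ) ^ 2 / 2 := by
  have h := SecurePairs.two_mul_ncard_isSecurePair_le hx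
  rw [Fintype.card_fin] at h
  rw [le_div_iff₀ two_pos, mul_comm]
  exact_mod_cast h
end

section
/- Let x : Fin n → ℝ be injective, let k ≥ 2, and let (i₁,…,i_k) be a k-tuple of pairwise distinct indices of Fin n that is not cycle-reconstructible. Setting d_j = |x i_{j+1} − x i_j| for 1 ≤ j ≤ k−1, there exists a vector (γ₁,…,γ_{k−1}) with each γ_j ∈ {−1, 0, 1}, not all zero, such that γ₁·d₁ + ⋯ + γ_{k−1}·d_{k−1} = 0. -/
/-- If a `k`-tuple of pairwise distinct indices is not cycle-reconstructible, then there is a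
non-zero `{-1, 0, 1}`-combination of the consecutive distances `d_j` that vanishes. -/
theorem statement17 {n k : ℕ} (x : Fin n → ℝ) (hx : Function.Injective x)
    (hk : 2 ≤ k) (t : Fin k → Fin n) (ht : Function.Injective t)
    (hnr : ¬ CycleReconstructible x t) :
    ∃ γ : Fin (k - 1) → ℝ,
      (∀ j, γ j = -1 ∨ γ j = 0 ∨ γ j = 1) ∧ (∃ j, γ j ≠ 0) ∧
      ∑ j : Fin (k - 1), γ j *
        |x (t ⟨(j : ℕ) + 1, by have := j.isLt; omega⟩) -
          x (t ⟨(j : ℕ), by have := j.isLt; omega⟩)| = 0 := by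
  unfold CycleReconstructible at hnr
  classical
  push_neg at hnr
  obtain ⟨w, h1, h2, a, b, hab⟩ := hnr
  have hk0 : 0 < k := by omega
  set W : ℕ → ℝ := fun j => if h : j < k then w ⟨j, h⟩ else 0 with hWdef
  set X : ℕ → ℝ := fun j => if h : j < k then x (t ⟨j, h⟩) else 0 with hXdef
  have hW : ∀ (j : ℕ) (h : j < k), W j = w ⟨j, h⟩ := by intro j h; simp [hWdef, h]
  have hX : ∀ (j : ℕ) (h : j < k), X j = x (t ⟨j, h⟩) := by intro j h; simp [hXdef, h]
  set dN : ℕ → ℝ := fun j => |X (j + 1) - X j| with hdNdef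
  have hdpos : ∀ j, j < k - 1 → 0 < dN j := by
    intro j hj
    have hj1 : j + 1 < k := by omega
    have hj0 : j < k := by omega
    rw [hdNdef]
    simp only [hX _ hj1, hX _ hj0]
    rw [abs_pos, sub_ne_zero]
    intro h
    have := hx h
    have := ht this
    simp [Fin.ext_iff] at this
  have hwd : ∀ j, j < k - 1 → |W (j + 1) - W j| = dN j := by
    intro j hj
    have hj1 : j + 1 < k := by omega
    rw [hdNdef]
    simp only [hW _ hj1, hW _ (Nat.lt_of_succ_lt hj1), hX _ hj1, hX _ (Nat.lt_of_succ_lt hj1)]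
    exact h1 j hj1
  set εN : ℕ → ℝ := fun j => (W (j + 1) - W j) / dN j with hεdef
  set δN : ℕ → ℝ := fun j => (X (j + 1) - X j) / dN j with hδdef
  have hεd : ∀ j, j < k - 1 → εN j * dN j = W (j + 1) - W j := by
    intro j hj
    exact div_mul_cancel₀ _ (ne_of_gt (hdpos j hj))
  have hδd : ∀ j, j < k - 1 → δN j * dN j = X (j + 1) - X j := by
    intro j hj
    exact div_mul_cancel₀ _ (ne_of_gt (hdpos j hj))
  have hεpm : ∀ j, j < k - 1 → εN j = 1 ∨ εN j = -1 := by
    intro j hj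
    have h : |εN j| = 1 := by
      rw [hεdef]
      rw [abs_div, hwd j hj, abs_of_pos (hdpos j hj), div_self (ne_of_gt (hdpos j hj))]
    rcases abs_eq (by norm_num : (0:ℝ) ≤ 1) |>.mp h with h' | h' <;> [left; right] <;> exact h'
  have hδpm : ∀ j, j < k - 1 → δN j = 1 ∨ δN j = -1 := by
    intro j hj
    have h : |δN j| = 1 := by
      rw [hδdef]
      rw [abs_div, show |X (j+1) - X j| = dN j from rfl, abs_of_pos (hdpos j hj),
        div_self (ne_of_gt (hdpos j hj))]
    rcases abs_eq (by norm_num : (0:ℝ) ≤ 1) |>.mp h with h' | h' <;> [left; right] <;> exact h'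
  -- telescoping sums
  have hSsum : ∑ j ∈ Finset.range (k - 1), (W (j + 1) - W j) = W (k - 1) - W 0 :=
    Finset.sum_range_sub W (k - 1)
  have hTsum : ∑ j ∈ Finset.range (k - 1), (X (j + 1) - X j) = X (k - 1) - X 0 :=
    Finset.sum_range_sub X (k - 1)
  -- the wrap condition
  have hk1 : k - 1 < k := by omega
  have h2' : |W (k - 1) - W 0| = |X (k - 1) - X 0| := by
    rw [hW _ hk1, hW _ hk0, hX _ hk1, hX _ hk0, abs_sub_comm, abs_sub_comm (x _)]
    exact h2 hk0
  obtain ⟨σ, hσpm, hσ⟩ : ∃ σ : ℝ, (σ = 1 ∨ σ = -1) ∧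
      W (k - 1) - W 0 = σ * (X (k - 1) - X 0) := by
    rcases abs_eq_abs.mp h2' with h | h
    · exact ⟨1, Or.inl rfl, by linarith⟩
    · exact ⟨-1, Or.inr rfl, by linarith⟩
  have hσabs : |σ| = 1 := by rcases hσpm with h | h <;> simp [h]
  refine ⟨fun j => (εN j - σ * δN j) / 2, ?_, ?_, ?_⟩
  · intro j
    have hj := j.isLt
    show (εN j.1 - σ * δN j.1) / 2 = -1 ∨ (εN j.1 - σ * δN j.1) / 2 = 0 ∨
      (εN j.1 - σ * δN j.1) / 2 = 1
    rcases hεpm j hj with h | h <;> rcases hδpm j hj with h' | h' <;>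
      rcases hσpm with h'' | h'' <;> rw [h, h', h''] <;> norm_num
  · by_contra hall
    push_neg at hall
    have hstep : ∀ j, j < k - 1 → W (j + 1) - W j = σ * (X (j + 1) - X j) := by
      intro j hj
      have h0 := hall ⟨j, hj⟩
      have hεσ : εN j = σ * δN j := by
        have : (εN j - σ * δN j) / 2 = 0 := h0
        linarith
      calc W (j + 1) - W j = εN j * dN j := (hεd j hj).symm
        _ = σ * (δN j * dN j) := by rw [hεσ]; ring
        _ = σ * (X (j + 1) - X j) := by rw [hδd j hj]
    have key : ∀ M, M < k → W M - W 0 = σ * (X M - X 0) := by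
      intro M
      induction M with
      | zero => intro _; ring
      | succ M ih =>
        intro h
        have hM : M < k := by omega
        have h1' := hstep M (by omega)
        have h2' := ih hM
        linarith [h1', h2']
    have hwab : ∀ c : Fin k, w c - w ⟨0, hk0⟩ = σ * (x (t c) - x (t ⟨0, hk0⟩)) := by
      intro c
      have := key c.1 c.2
      rw [hW _ c.2, hW _ hk0, hX _ c.2, hX _ hk0] at this
      exact this
    apply hab
    have ha := hwab a
    have hb := hwab b
    have : w a - w b = σ * (x (t a) - x (t b)) := by linarith
    rw [this, abs_mul, hσabs, one_mul]
  · have hterm : ∀ j : Fin (k - 1),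
        ((εN j.1 - σ * δN j.1) / 2) *
          |x (t ⟨(j : ℕ) + 1, by have := j.isLt; omega⟩) -
            x (t ⟨(j : ℕ), by have := j.isLt; omega⟩)| =
        ((W (j.1 + 1) - W j.1) - σ * (X (j.1 + 1) - X j.1)) / 2 := by
      intro j
      have hj := j.isLt
      have hj1 : j.1 + 1 < k := by omega
      have hd : |x (t ⟨(j : ℕ) + 1, by omega⟩) - x (t ⟨(j : ℕ), by omega⟩)| = dN j.1 := by
        rw [hdNdef]
        simp only [hX _ hj1, hX _ (Nat.lt_of_succ_lt hj1)]
      rw [hd]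
      rw [div_mul_eq_mul_div, sub_mul, mul_assoc, hεd j.1 hj, hδd j.1 hj]
    rw [Finset.sum_congr rfl (fun j _ => hterm j)]
    rw [Fin.sum_univ_eq_sum_range (fun j => ((W (j + 1) - W j) - σ * (X (j + 1) - X j)) / 2)]
    rw [← Finset.sum_div, Finset.sum_sub_distrib, hSsum, ← Finset.mul_sum, hTsum, hσ]
    ring
end

section
/- For all integers k ≥ 1 and ℓ ≥ 2, the box (Cartesian) product of the complete graph on k vertices with the path graph on ℓ vertices is a k-connected simple graph on k·ℓ vertices. -/
/-- A simple graph on a finite vertex type `V` with `|V| > k` is `k`-connected if removing any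
set of fewer than `k` vertices leaves a connected induced subgraph. -/
def KConnected {V : Type*} [Fintype V] (k : ℕ) (G : SimpleGraph V) : Prop :=
  k < Fintype.card V ∧
    ∀ S : Set V, S.ncard < k → (G.induce (Sᶜ : Set V)).Connected

/-- The box product of the complete graph on `k` vertices with the path on `ℓ` vertices is a
`k`-connected simple graph on `k·ℓ` vertices. -/
theorem statement18 (k ℓ : ℕ) (hk : 1 ≤ k) (hℓ : 2 ≤ ℓ) :
    Fintype.card (Fin k × Fin ℓ) = k * ℓ ∧
      KConnected k ((⊤ : SimpleGraph (Fin k)).boxProd (SimpleGraph.pathGraph ℓ)) := by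
  refine ⟨by simp, ?_, ?_⟩
  · have h2 : k * 2 ≤ k * ℓ := Nat.mul_le_mul_left k hℓ
    simp only [Fintype.card_prod, Fintype.card_fin]
    omega
  · intro S hS
    classical
    set G := (⊤ : SimpleGraph (Fin k)).boxProd (SimpleGraph.pathGraph ℓ) with hG
    set G' := G.induce (Sᶜ : Set (Fin k × Fin ℓ)) with hG'
    -- each column has a survivor
    have hinj : ∀ f : Fin k → Fin k × Fin ℓ, (∀ a, (f a).1 = a) → Set.range f ⊆ S → k ≤ S.ncard := by
      intro f hf hsub
      have hinjf : Function.Injective f := by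
        intro a b hab
        rw [← hf a, ← hf b, hab]
      have : (Set.range f).ncard = k := by
        rw [← Set.image_univ, Set.ncard_image_of_injective _ hinjf, Set.ncard_univ,
          Nat.card_eq_fintype_card, Fintype.card_fin]
      calc k = (Set.range f).ncard := this.symm
        _ ≤ S.ncard := Set.ncard_le_ncard hsub (Set.toFinite S)
    have hcol : ∀ j : Fin ℓ, ∃ a : Fin k, (a, j) ∉ S := by
      intro j
      by_contra h
      push_neg at h
      have := hinj (fun a => (a, j)) (fun a => rfl) (by rintro _ ⟨a, rfl⟩; exact h a)
      omega
    have hpair : ∀ j j' : Fin ℓ, ∃ a : Fin k, (a, j) ∉ S ∧ (a, j') ∉ S := by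
      intro j j'
      by_contra h
      push_neg at h
      have := hinj (fun a => if (a, j) ∈ S then (a, j) else (a, j'))
        (fun a => by by_cases hc : (a, j) ∈ S <;> simp [hc])
        (by rintro _ ⟨a, rfl⟩
            by_cases hc : (a, j) ∈ S
            · simp [hc]
            · simp [hc, h a hc])
      omega
    have hadj : ∀ (u v : ↥(Sᶜ : Set (Fin k × Fin ℓ))), G.Adj u.1 v.1 → G'.Adj u v := by
      intro u v h
      exact h
    have hreach_col : ∀ (a b : Fin k) (j : Fin ℓ) (ha : (a, j) ∉ S) (hb : (b, j) ∉ S),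
        G'.Reachable ⟨(a, j), ha⟩ ⟨(b, j), hb⟩ := by
      intro a b j ha hb
      rcases eq_or_ne a b with rfl | hne
      · exact SimpleGraph.Reachable.refl _
      · exact (hadj ⟨(a, j), ha⟩ ⟨(b, j), hb⟩ (Or.inl ⟨hne, rfl⟩)).reachable
    have hcross : ∀ (j j' : Fin ℓ), (SimpleGraph.pathGraph ℓ).Adj j j' →
        ∀ (a : Fin k) (ha : (a, j) ∉ S) (b : Fin k) (hb : (b, j') ∉ S),
        G'.Reachable ⟨(a, j), ha⟩ ⟨(b, j'), hb⟩ := by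
      intro j j' hjj' a ha b hb
      obtain ⟨c, hc, hc'⟩ := hpair j j'
      refine (hreach_col a c j ha hc).trans (SimpleGraph.Reachable.trans ?_ (hreach_col c b j' hc' hb))
      exact (hadj ⟨(c, j), hc⟩ ⟨(c, j'), hc'⟩ (Or.inr ⟨hjj', rfl⟩)).reachable
    have hz : (0 : ℕ) < ℓ := by omega
    obtain ⟨a0, ha0⟩ := hcol ⟨0, hz⟩
    have hto0 : ∀ (n : ℕ) (j : Fin ℓ), j.val = n → ∀ (a : Fin k) (ha : (a, j) ∉ S),
        G'.Reachable ⟨(a, j), ha⟩ ⟨(a0, ⟨0, hz⟩), ha0⟩ := by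
      intro n
      induction n with
      | zero =>
        intro j hj a ha
        have : j = ⟨0, hz⟩ := Fin.ext hj
        subst this
        exact hreach_col a a0 _ ha ha0
      | succ m ih =>
        intro j hj a ha
        have hm : m < ℓ := by omega
        set j' : Fin ℓ := ⟨m, hm⟩ with hj'
        have hadjj : (SimpleGraph.pathGraph ℓ).Adj j j' := by
          rw [SimpleGraph.pathGraph_adj]
          right
          simp [hj', hj]
        obtain ⟨b, hb⟩ := hcol j'
        exact (hcross j j' hadjj a ha b hb).trans (ih j' rfl b hb)
    haveI : Nonempty ↥(Sᶜ : Set (Fin k × Fin ℓ)) := ⟨⟨(a0, ⟨0, hz⟩), ha0⟩⟩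
    refine ⟨fun u v => ?_⟩
    obtain ⟨⟨a, j⟩, hu⟩ := u
    obtain ⟨⟨b, i⟩, hv⟩ := v
    exact (hto0 j.val j rfl a hu).trans (hto0 i.val i rfl b hv).symm
end
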